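/- arXiv:2312.06894 — 4 statements merged into one kernel-verified Lean document; each statement's English description precedes it below -/
import Mathlib

section
/- Let α, β ∈ ℂ with Re α + Re β > −1 and let 1 ≤ p < ∞. Then for every z in the open unit disc 𝔻, (1/2π) ∫₀^{2π} |u_{α,β}(z e^{−iθ})|^p dθ ≤ e^{(pπ/2)|Im α − Im β|} · Γ(p(Re α + Re β + 2) − 1) / Γ(p(Re α + Re β + 2)/2)² · (1 − |z|²)^{1−p}. -/
open MeasureTheory

noncomputable section

/-- The function `u_{α,β}(z) = (1-|z|²)^{α+β+1} (1-z)^{-(α+1)} (1-conj z)^{-(β+1)}`. -/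
def uab (α β : ℂ) (z : ℂ) : ℂ :=
  (((1 : ℝ) - ‖z‖ ^ 2 : ℝ) : ℂ) ^ (α + β + 1) *
    (1 - z) ^ (-(α + 1)) * (1 - (starRingEnd ℂ) z) ^ (-(β + 1))

/-- The normalizing constant `c_{α,β} = Γ(α+1)Γ(β+1)/Γ(α+β+1)`. -/
def cab (α β : ℂ) : ℂ :=
  Complex.Gamma (α + 1) * Complex.Gamma (β + 1) / Complex.Gamma (α + β + 1)

/-- The `(α,β)`-Poisson integral of `φ`. -/
def Pab (α β : ℂ) (φ : ℂ → ℂ) (z : ℂ) : ℂ :=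
  cab α β * ((1 / (2 * Real.pi) : ℝ) : ℂ) *
    ∫ t in (0 : ℝ)..(2 * Real.pi),
      uab α β (z * Complex.exp (-(Complex.I * t))) * φ (Complex.exp (Complex.I * t))

/-- Wirtinger derivative `∂f = (f_x - i f_y)/2`. -/
def wdz (f : ℂ → ℂ) : ℂ → ℂ := fun z =>
  (fderiv ℝ f z 1 - Complex.I * fderiv ℝ f z Complex.I) / 2

/-- Wirtinger derivative `∂̄f = (f_x + i f_y)/2`. -/
def wdzbar (f : ℂ → ℂ) : ℂ → ℂ := fun z =>
  (fderiv ℝ f z 1 + Complex.I * fderiv ℝ f z Complex.I) / 2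

/-- `‖Df(z)‖ = |∂f(z)| + |∂̄f(z)|`. -/
def normD (f : ℂ → ℂ) (z : ℂ) : ℝ :=
  ‖wdz f z‖ + ‖wdzbar f z‖

/-- `α` is not a negative integer. -/
def notNegInt (α : ℂ) : Prop := ∀ n : ℕ, α ≠ -((n : ℂ) + 1)

end

noncomputable section

namespace Stmt0Aux

/-- Binomial coefficient `Γ(d+n)/(Γ(d) n!)` written as a product. -/
def bc (d : ℝ) (n : ℕ) : ℝ := (∏ j ∈ Finset.range n, (d + j)) / n.factorial

lemma hasDerivAt_one_sub_cpow (e : ℂ) {w : ℂ} (hw : w.re < 1) :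
    HasDerivAt (fun w : ℂ => (1 - w) ^ e) (e * (1 - w) ^ (e - 1) * (-1)) w := by
  have h1 : (1 - w) ∈ Complex.slitPlane := by
    rw [Complex.mem_slitPlane_iff]
    left
    simp only [Complex.sub_re, Complex.one_re]
    linarith
  exact (((hasDerivAt_id w).const_sub 1)).cpow_const h1

lemma iteratedDeriv_one_sub_cpow (d : ℝ) :
    ∀ (n : ℕ) (w : ℂ), w.re < 1 →
      iteratedDeriv n (fun w : ℂ => (1 - w) ^ (-(d : ℂ))) w
        = (∏ j ∈ Finset.range n, ((d : ℂ) + j)) * (1 - w) ^ (-(d : ℂ) - n) := by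
  intro n
  induction n with
  | zero => intro w hw; simp
  | succ n ih =>
    intro w hw
    rw [iteratedDeriv_succ]
    have hU : IsOpen {w : ℂ | w.re < 1} := isOpen_lt Complex.continuous_re continuous_const
    have hev : iteratedDeriv n (fun w : ℂ => (1 - w) ^ (-(d : ℂ))) =ᶠ[nhds w]
        fun w => (∏ j ∈ Finset.range n, ((d : ℂ) + j)) * (1 - w) ^ (-(d : ℂ) - n) := by
      filter_upwards [hU.mem_nhds hw] with x hx using ih x hx
    rw [hev.deriv_eq]
    have hD := ((hasDerivAt_one_sub_cpow (-(d : ℂ) - n) hw).const_mul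
        (∏ j ∈ Finset.range n, ((d : ℂ) + j)))
    rw [hD.deriv, Finset.prod_range_succ]
    have he : -(d : ℂ) - n - 1 = -(d : ℂ) - (n + 1 : ℕ) := by push_cast; ring
    rw [he]
    ring

theorem hasSum_one_sub_cpow (d : ℝ) {w : ℂ} (hw : ‖w‖ < 1) :
    HasSum (fun n => (bc d n : ℂ) * w ^ n) ((1 - w) ^ (-(d : ℂ))) := by
  set f : ℂ → ℂ := fun w => (1 - w) ^ (-(d : ℂ)) with hf
  have hre : ∀ x : ℂ, ‖x‖ < 1 → x.re < 1 := by
    intro x hx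
    calc x.re ≤ |x.re| := le_abs_self _
    _ ≤ ‖x‖ := Complex.abs_re_le_norm x
    _ < 1 := hx
  set R : NNReal := ⟨(1 + ‖w‖) / 2, by positivity⟩ with hR
  have hR1 : (R : ℝ) < 1 := by
    change (1 + ‖w‖) / 2 < 1
    linarith
  have hwR : ‖w‖ < R := by
    change ‖w‖ < (1 + ‖w‖) / 2
    linarith
  have hR0 : 0 < R := by
    rw [← NNReal.coe_lt_coe]
    have := norm_nonneg w
    simp only [hR, NNReal.coe_mk, NNReal.coe_zero]
    linarith
  have hdiff : DifferentiableOn ℂ f (Metric.closedBall (0 : ℂ) R) := by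
    intro x hx
    have hx1 : ‖x‖ < 1 := by
      have := Metric.mem_closedBall.mp hx
      rw [Complex.dist_eq, sub_zero] at this
      linarith
    exact ((hasDerivAt_one_sub_cpow (-(d : ℂ)) (hre x hx1)).differentiableAt).differentiableWithinAt
  have hball := hdiff.hasFPowerSeriesOnBall hR0
  have hmem : w ∈ Metric.eball (0 : ℂ) ((R : NNReal) : ENNReal) := by
    rw [Metric.mem_eball, edist_zero_right, enorm_eq_nnnorm]
    rw [show (‖w‖₊ : ENNReal) < (R : ENNReal) ↔ ‖w‖₊ < R from ENNReal.coe_lt_coe]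
    rw [← NNReal.coe_lt_coe]
    simpa using hwR
  have hs := hball.hasSum_iteratedFDeriv hmem
  simp only [zero_add] at hs
  refine hs.congr_fun (fun n => ?_)
  rw [iteratedFDeriv_apply_eq_iteratedDeriv_mul_prod,
    iteratedDeriv_one_sub_cpow d n 0 (by norm_num)]
  simp only [Finset.prod_const, Finset.card_univ, Fintype.card_fin, sub_zero, Complex.one_cpow, mul_one]
  rw [bc, smul_eq_mul, smul_eq_mul]
  push_cast
  field_simp

lemma prod_range_eq_Gamma {d : ℝ} (hd : 0 < d) (n : ℕ) :
    (∏ j ∈ Finset.range n, (d + j)) = Real.Gamma (d + n) / Real.Gamma d := by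
  induction n with
  | zero => simp [div_self (Real.Gamma_pos_of_pos hd).ne']
  | succ n ih =>
    rw [Finset.prod_range_succ, ih]
    have h1 : d + (n + 1 : ℕ) = (d + n) + 1 := by push_cast; ring
    rw [h1, Real.Gamma_add_one (by positivity)]
    field_simp

lemma bc_eq_Gamma {d : ℝ} (hd : 0 < d) (n : ℕ) :
    bc d n = Real.Gamma (d + n) / (Real.Gamma d * n.factorial) := by
  rw [bc, prod_range_eq_Gamma hd, div_div]

lemma bc_nonneg {d : ℝ} (hd : 0 < d) (n : ℕ) : 0 ≤ bc d n := by
  rw [bc_eq_Gamma hd]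
  have h1 := Real.Gamma_pos_of_pos hd
  have h2 := Real.Gamma_pos_of_pos (by positivity : (0:ℝ) < d + n)
  positivity

lemma sq_Gamma_le {x y : ℝ} (hx : 0 < x) (hy : 0 < y) :
    Real.Gamma ((x + y) / 2) ^ 2 ≤ Real.Gamma x * Real.Gamma y := by
  have h := Real.convexOn_log_Gamma.2 (Set.mem_Ioi.mpr hx) (Set.mem_Ioi.mpr hy)
    (by norm_num : (0:ℝ) ≤ (1:ℝ)/2) (by norm_num : (0:ℝ) ≤ (1:ℝ)/2) (by norm_num)
  simp only [Function.comp_apply, smul_eq_mul] at h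
  have hmid : (1:ℝ)/2 * x + 1/2 * y = (x + y)/2 := by ring
  rw [hmid] at h
  have hgx := Real.Gamma_pos_of_pos hx
  have hgy := Real.Gamma_pos_of_pos hy
  have hgm := Real.Gamma_pos_of_pos (by positivity : (0:ℝ) < (x+y)/2)
  have := Real.exp_le_exp.mpr h
  rw [Real.exp_log hgm] at this
  calc Real.Gamma ((x+y)/2) ^ 2 ≤ (Real.exp (1/2 * Real.log (Real.Gamma x) + 1/2 * Real.log (Real.Gamma y))) ^ 2 := by
        exact pow_le_pow_left₀ hgm.le this 2
  _ = Real.Gamma x * Real.Gamma y := by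
        rw [← Real.exp_nat_mul]
        push_cast
        rw [show (2:ℝ) * (1/2 * Real.log (Real.Gamma x) + 1/2 * Real.log (Real.Gamma y))
            = Real.log (Real.Gamma x) + Real.log (Real.Gamma y) by ring,
          Real.exp_add, Real.exp_log hgx, Real.exp_log hgy]

open intervalIntegral in
set_option maxHeartbeats 1000000 in
theorem key_integral (c : ℝ) (hc : 1 < c) {z : ℂ} (hz : ‖z‖ < 1) :
    (∫ θ in (0:ℝ)..(2*Real.pi), ‖1 - z * Complex.exp (-(Complex.I * θ))‖ ^ (-c))
      ≤ 2*Real.pi * ((Real.Gamma (c-1) / Real.Gamma (c/2)^2) * (1 - ‖z‖^2) ^ (1-c)) := by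
  have hπ : (0:ℝ) < 2*Real.pi := by positivity
  set d : ℝ := c/2 with hd_def
  have hd : 0 < d := by rw [hd_def]; linarith
  set r : ℝ := ‖z‖ with hr_def
  have hr0 : 0 ≤ r := norm_nonneg z
  set x : ℝ := r^2 with hx_def
  have hx0 : 0 ≤ x := by positivity
  have hx1 : x < 1 := by
    rw [hx_def]
    nlinarith
  have h1x : 0 < 1 - x := by linarith
  set w : ℝ → ℂ := fun θ => z * Complex.exp (-(Complex.I * θ)) with hw_def
  have habsw : ∀ θ : ℝ, ‖w θ‖ = r := by
    intro θ
    simp [hw_def, norm_mul, Complex.norm_exp, hr_def]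
  have hw1 : ∀ θ : ℝ, ‖w θ‖ < 1 := fun θ => by rw [habsw]; exact hz
  have hne : ∀ θ : ℝ, (1 : ℂ) - w θ ≠ 0 := by
    intro θ h
    have h2 := hw1 θ
    have h3 : w θ = 1 := by linear_combination -h
    rw [h3] at h2
    simp at h2
  have habs_pos : ∀ θ : ℝ, 0 < ‖1 - w θ‖ := fun θ => by
    simpa [norm_pos_iff] using hne θ
  set g : ℝ → ℂ := fun θ => (1 - w θ) ^ (-(d:ℂ)) with hg_def
  have habsg : ∀ θ : ℝ, ‖g θ‖ = (‖1 - w θ‖) ^ (-d) := by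
    intro θ
    rw [hg_def]
    rw [Complex.norm_cpow_of_ne_zero (hne θ)]
    simp
  have hgsq : ∀ θ : ℝ, (‖1 - w θ‖) ^ (-c) = Complex.normSq (g θ) := by
    intro θ
    rw [← Complex.sq_norm, habsg, sq, ← Real.rpow_add (habs_pos θ)]
    congr 1
    rw [hd_def]; ring
  -- real summability of the coefficient series
  have hbR : ∀ (e : ℝ) (y : ℝ), 0 ≤ y → y < 1 →
      HasSum (fun k => bc e k * y ^ k) ((1 - y) ^ (-e)) := by
    intro e y hy0 hy1
    have h1 := hasSum_one_sub_cpow e (w := (y:ℂ)) (by simpa [abs_of_nonneg hy0] using hy1)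
    have h2 := h1.mapL Complex.reCLM
    have h3 : ∀ k : ℕ, Complex.reCLM ((bc e k : ℂ) * (y:ℂ) ^ k) = bc e k * y ^ k := by
      intro k
      push_cast
      simp [← Complex.ofReal_pow, ← Complex.ofReal_mul]
    have h4 : Complex.reCLM ((1 - (y:ℂ)) ^ (-(e:ℂ))) = (1 - y) ^ (-e) := by
      have : ((1:ℂ) - (y:ℂ)) = (((1 - y : ℝ)):ℂ) := by push_cast; ring
      rw [this, ← Complex.ofReal_neg, ← Complex.ofReal_cpow (by linarith)]
      simp
    rw [← h4]
    exact h2.congr_fun (fun k => (h3 k).symm)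
  have hb : Summable (fun k => bc d k * r ^ k) := ((hbR d r hr0 hz).summable)
  have hGsum : ∀ θ : ℝ, HasSum (fun k => (bc d k : ℂ) * (w θ)^k) (g θ) :=
    fun θ => hasSum_one_sub_cpow d (hw1 θ)
  have hGconj : ∀ θ : ℝ, HasSum (fun k => (starRingEnd ℂ) ((bc d k : ℂ) * (w θ)^k))
      ((starRingEnd ℂ) (g θ)) := by
    intro θ
    have := (hGsum θ).mapL Complex.conjCLE.toContinuousLinearMap
    simpa using this
  have hnormval : ∀ (θ : ℝ) (k : ℕ), ‖(bc d k : ℂ) * (w θ)^k‖ = bc d k * r ^ k := by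
    intro θ k
    rw [norm_mul, norm_pow, habsw,
      Complex.norm_real, Real.norm_eq_abs, abs_of_nonneg (bc_nonneg hd k)]
  have hnorm : ∀ θ : ℝ, Summable (fun k => ‖(bc d k : ℂ) * (w θ)^k‖) := by
    intro θ
    exact hb.congr (fun k => (hnormval θ k).symm)
  have hnormc : ∀ θ : ℝ, Summable (fun k => ‖(starRingEnd ℂ) ((bc d k : ℂ) * (w θ)^k)‖) := by
    intro θ
    simpa only [RCLike.norm_conj] using hnorm θ
  set F : ℕ × ℕ → ℝ → ℂ := fun km θ =>
      ((bc d km.1 : ℂ) * (w θ)^km.1) * ((starRingEnd ℂ) ((bc d km.2 : ℂ) * (w θ)^km.2)) with hF_def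
  have hPair : ∀ θ : ℝ, HasSum (fun km : ℕ × ℕ => F km θ) (g θ * (starRingEnd ℂ) (g θ)) := by
    intro θ
    have hs := (summable_mul_of_summable_norm (hnorm θ) (hnormc θ)).hasSum
    rwa [← tsum_mul_tsum_of_summable_norm (hnorm θ) (hnormc θ), (hGsum θ).tsum_eq,
      (hGconj θ).tsum_eq] at hs
  have hcw : Continuous w := by
    apply Continuous.mul continuous_const
    exact Complex.continuous_exp.comp (by continuity)
  have hFcont : ∀ km : ℕ × ℕ, Continuous (F km) := by
    intro km
    apply Continuous.mul
    · exact continuous_const.mul ((hcw.pow _))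
    · exact Complex.continuous_conj.comp (continuous_const.mul (hcw.pow _))
  -- hasSum of integrals via dominated convergence
  have hKey := MeasureTheory.hasSum_integral_of_dominated_convergence
    (μ := MeasureTheory.volume.restrict (Set.Ioc (0:ℝ) (2*Real.pi)))
    (F := F) (f := fun θ => g θ * (starRingEnd ℂ) (g θ))
    (bound := fun km _ => (bc d km.1 * r ^ km.1) * (bc d km.2 * r ^ km.2))
    (fun km => (hFcont km).aestronglyMeasurable)
    (by
      intro km
      filter_upwards with θ
      rw [hF_def]
      simp only []
      rw [norm_mul, RCLike.norm_conj, hnormval θ km.1, hnormval θ km.2])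
    (by
      filter_upwards with θ
      exact hb.mul_of_nonneg hb (fun k => mul_nonneg (bc_nonneg hd k) (by positivity))
        (fun k => mul_nonneg (bc_nonneg hd k) (by positivity)))
    (MeasureTheory.integrableOn_const measure_Ioc_lt_top.ne)
    (by
      filter_upwards with θ
      exact hPair θ)
  have h02 : (0:ℝ) ≤ 2*Real.pi := hπ.le
  have hFform : ∀ (k m : ℕ) (θ : ℝ), F (k, m) θ =
      ((bc d k : ℂ) * (bc d m : ℂ) * z^k * ((starRingEnd ℂ) z)^m) *
        Complex.exp ((((m:ℂ) - (k:ℂ)) * Complex.I) * (θ:ℂ)) := by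
    intro k m θ
    have hE : (starRingEnd ℂ) (Complex.exp (-(Complex.I * θ))) = Complex.exp (Complex.I * θ) := by
      rw [← Complex.exp_conj]
      congr 1
      simp [Complex.conj_ofReal]
    have hpow1 : Complex.exp (-(Complex.I * θ)) ^ k = Complex.exp ((k:ℂ) * -(Complex.I * θ)) :=
      (Complex.exp_nat_mul _ k).symm
    have hpow2 : Complex.exp (Complex.I * θ) ^ m = Complex.exp ((m:ℂ) * (Complex.I * θ)) :=
      (Complex.exp_nat_mul _ m).symm
    rw [hF_def]
    simp only [hw_def, map_mul, map_pow, hE, Complex.conj_ofReal, mul_pow]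
    rw [hpow1, hpow2,
      show (((m:ℂ) - k) * Complex.I) * (θ:ℂ)
        = (m:ℂ)*(Complex.I*θ) + (k:ℂ) * -(Complex.I*θ) by ring,
      Complex.exp_add]
    ring
  have hFint : ∀ km : ℕ × ℕ, (∫ θ in (0:ℝ)..(2*Real.pi), F km θ)
      = if km.1 = km.2 then (((2*Real.pi) * (bc d km.1^2 * x^km.1) : ℝ) : ℂ) else 0 := by
    rintro ⟨k, m⟩
    by_cases hkm : k = m
    · subst hkm
      rw [if_pos rfl]
      have hconst : Set.EqOn (F (k, k)) (fun _ : ℝ => ((bc d k^2 * x^k : ℝ) : ℂ))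
          (Set.uIcc (0:ℝ) (2*Real.pi)) := by
        intro θ _
        rw [hFform]
        have hz2 : z^k * ((starRingEnd ℂ) z)^k = ((x : ℝ):ℂ)^k := by
          rw [← mul_pow, Complex.mul_conj, hx_def, hr_def]
          norm_cast
          rw [Complex.normSq_eq_norm_sq]
        simp only [sub_self, zero_mul, Complex.exp_zero, mul_one]
        rw [mul_assoc, hz2]
        push_cast
        ring
      rw [intervalIntegral.integral_congr hconst, intervalIntegral.integral_const]
      push_cast
      rw [Complex.real_smul]
      push_cast
      ring
    · rw [if_neg hkm]
      have hcc : ((m:ℂ) - k) * Complex.I ≠ 0 := by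
        apply mul_ne_zero _ Complex.I_ne_zero
        rw [sub_ne_zero]
        exact_mod_cast (Ne.symm hkm)
      have hcong : Set.EqOn (F (k, m))
          (fun θ : ℝ => ((bc d k : ℂ) * (bc d m : ℂ) * z^k * ((starRingEnd ℂ) z)^m) *
            Complex.exp ((((m:ℂ) - (k:ℂ)) * Complex.I) * (θ:ℂ)))
          (Set.uIcc (0:ℝ) (2*Real.pi)) := fun θ _ => hFform k m θ
      rw [intervalIntegral.integral_congr hcong, intervalIntegral.integral_const_mul,
        integral_exp_mul_complex hcc]
      have h1 : (((m:ℂ)-k) * Complex.I) * ((2*Real.pi : ℝ):ℂ)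
          = ((m - k : ℤ) : ℂ) * (2*Real.pi*Complex.I) := by push_cast; ring
      rw [h1, Complex.exp_int_mul_two_pi_mul_I]
      simp
  have h5 : ∀ km : ℕ × ℕ, (∫ θ in Set.Ioc (0:ℝ) (2*Real.pi), F km θ)
      = if km.1 = km.2 then (((2*Real.pi) * (bc d km.1^2 * x^km.1) : ℝ) : ℂ) else 0 := by
    intro km
    rw [← intervalIntegral.integral_of_le h02]
    exact hFint km
  have hT' : HasSum (fun km : ℕ × ℕ =>
      if km.1 = km.2 then (((2*Real.pi) * (bc d km.1^2 * x^km.1) : ℝ):ℂ) else 0)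
      (∫ θ in Set.Ioc (0:ℝ) (2*Real.pi), g θ * (starRingEnd ℂ) (g θ)) :=
    hKey.congr_fun (fun km => (h5 km).symm)
  have hinj : Function.Injective (fun k : ℕ => ((k, k) : ℕ × ℕ)) := by
    intro a b h
    simpa using congrArg Prod.fst h
  have h0 : ∀ km : ℕ × ℕ, km ∉ Set.range (fun k : ℕ => ((k,k):ℕ×ℕ)) →
      (if km.1 = km.2 then (((2*Real.pi) * (bc d km.1^2 * x^km.1) : ℝ):ℂ) else 0) = 0 := by
    rintro ⟨k, m⟩ hkm
    rw [if_neg]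
    intro h
    exact hkm ⟨k, by simp only at h; simp [h]⟩
  have hdiag : HasSum (fun k : ℕ => (((2*Real.pi) * (bc d k^2 * x^k) : ℝ):ℂ))
      (∫ θ in Set.Ioc (0:ℝ) (2*Real.pi), g θ * (starRingEnd ℂ) (g θ)) := by
    exact ((Function.Injective.hasSum_iff hinj h0).mpr hT').congr_fun (fun k => by simp)
  have hJ : (∫ θ in Set.Ioc (0:ℝ) (2*Real.pi), g θ * (starRingEnd ℂ) (g θ))
      = (((∫ θ in (0:ℝ)..(2*Real.pi), Complex.normSq (g θ)) : ℝ) : ℂ) := by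
    rw [← intervalIntegral.integral_of_le h02, ← intervalIntegral.integral_ofReal]
    apply intervalIntegral.integral_congr
    intro θ _
    exact Complex.mul_conj (g θ)
  rw [hJ] at hdiag
  have hreal : HasSum (fun k => (2*Real.pi) * (bc d k^2 * x^k))
      (∫ θ in (0:ℝ)..(2*Real.pi), Complex.normSq (g θ)) := by
    have h7 := hdiag.mapL Complex.reCLM
    simpa only [Complex.reCLM_apply, Complex.ofReal_re] using h7
  have hc1 : 0 < c - 1 := by linarith
  have hterm : ∀ k : ℕ, (2*Real.pi) * (bc d k^2 * x^k)
      ≤ (2*Real.pi) * ((Real.Gamma (c-1)/Real.Gamma d^2) * (bc (c-1) k * x^k)) := by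
    intro k
    apply mul_le_mul_of_nonneg_left _ hπ.le
    have hΓd := Real.Gamma_pos_of_pos hd
    have hΓc := Real.Gamma_pos_of_pos hc1
    have hΓdk := Real.Gamma_pos_of_pos (show (0:ℝ) < d + k by positivity)
    have hΓck := Real.Gamma_pos_of_pos (show (0:ℝ) < (c-1) + k by positivity)
    have hkf : (0:ℝ) < (k.factorial : ℝ) := by exact_mod_cast k.factorial_pos
    have hbck : bc d k^2 ≤ (Real.Gamma (c-1)/Real.Gamma d^2) * bc (c-1) k := by
      rw [bc_eq_Gamma hd, bc_eq_Gamma hc1]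
      have hG := sq_Gamma_le (show (0:ℝ) < (k:ℝ)+1 by positivity)
        (show (0:ℝ) < c - 1 + k by positivity)
      have hmid : (((k:ℝ)+1) + (c-1+k))/2 = d + k := by rw [hd_def]; ring
      rw [hmid] at hG
      have hG' : Real.Gamma (d + k)^2 ≤ (k.factorial : ℝ) * Real.Gamma (c-1+k) := by
        rwa [Real.Gamma_nat_eq_factorial] at hG
      rw [div_pow, div_mul_div_comm, div_le_div_iff₀ (by positivity) (by positivity)]
      calc Real.Gamma (d + k) ^ 2 * (Real.Gamma d ^ 2 * (Real.Gamma (c-1) * k.factorial))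
          ≤ ((k.factorial : ℝ) * Real.Gamma (c-1+k)) * (Real.Gamma d ^ 2 * (Real.Gamma (c-1) * k.factorial)) := by
            apply mul_le_mul_of_nonneg_right hG' (by positivity)
      _ = Real.Gamma (c-1) * Real.Gamma (c-1+k) * (Real.Gamma d * k.factorial) ^ 2 := by ring
    calc bc d k^2 * x^k ≤ ((Real.Gamma (c-1)/Real.Gamma d^2) * bc (c-1) k) * x^k :=
          mul_le_mul_of_nonneg_right hbck (by positivity)
    _ = (Real.Gamma (c-1)/Real.Gamma d^2) * (bc (c-1) k * x^k) := by ring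
  have hB := ((hbR (c-1) x hx0 hx1).mul_left
    (Real.Gamma (c-1)/Real.Gamma d^2)).mul_left (2*Real.pi)
  have hfin := hasSum_le hterm hreal hB
  have hIeq : (∫ θ in (0:ℝ)..(2*Real.pi),
      ‖1 - z * Complex.exp (-(Complex.I * θ))‖ ^ (-c))
      = ∫ θ in (0:ℝ)..(2*Real.pi), Complex.normSq (g θ) :=
    intervalIntegral.integral_congr (fun θ _ => hgsq θ)
  rw [hIeq]
  rw [show -(c-1) = 1-c from by ring] at hfin
  exact hfin


lemma abs_uab (α β : ℂ) {v : ℂ} (hv : ‖v‖ < 1) :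
    ‖uab α β v‖ = (1 - ‖v‖^2) ^ ((α+β).re + 1)
      * (‖1 - v‖) ^ (-((α+β).re + 2))
      * Real.exp ((1 - v).arg * (α.im - β.im)) := by
  have h1 : (0:ℝ) < 1 - ‖v‖^2 := by nlinarith [norm_nonneg v]
  have hrev : 0 < (1 - v).re := by
    have h3 : v.re ≤ |v.re| := le_abs_self _
    have h2 := Complex.abs_re_le_norm v
    simp only [Complex.sub_re, Complex.one_re]
    linarith
  have hne : (1:ℂ) - v ≠ 0 := by
    intro h
    rw [h] at hrev
    simp at hrev
  have hargpi : (1 - v).arg ≠ Real.pi := by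
    intro h
    rw [Complex.arg_eq_pi_iff] at h
    linarith [h.1]
  have hconj : (1 : ℂ) - (starRingEnd ℂ) v = (starRingEnd ℂ) (1 - v) := by
    rw [map_sub, map_one]
  have hcne : (starRingEnd ℂ) (1 - v) ≠ 0 := by
    intro h
    apply hne
    have h2 := congrArg (starRingEnd ℂ) h
    simpa using h2
  rw [uab, norm_mul, norm_mul]
  rw [Complex.norm_cpow_eq_rpow_re_of_pos h1]
  rw [Complex.norm_cpow_of_ne_zero hne, hconj, Complex.norm_cpow_of_ne_zero hcne]
  rw [Complex.norm_conj, Complex.arg_conj, if_neg hargpi]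
  set A := ‖1 - v‖ with hA
  have hA0 : 0 < A := by rwa [hA, norm_pos_iff]
  have e1 : (-(α + 1)).re = -(α.re + 1) := by simp
  have e2 : (-(α + 1)).im = -α.im := by simp
  have e3 : (-(β + 1)).re = -(β.re + 1) := by simp
  have e4 : (-(β + 1)).im = -β.im := by simp
  have e5 : (α + β + 1).re = (α+β).re + 1 := by simp
  rw [e1, e2, e3, e4, e5]
  rw [show A ^ (-((α+β).re + 2)) = A ^ (-(α.re+1)) * A ^ (-(β.re+1)) by
    rw [← Real.rpow_add hA0]; congr 1; simp [Complex.add_re]; ring]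
  rw [div_eq_mul_inv, div_eq_mul_inv, ← Real.exp_neg, ← Real.exp_neg]
  rw [show Real.exp ((1-v).arg * (α.im - β.im))
      = Real.exp (-((1-v).arg * -α.im)) * Real.exp (-(-(1-v).arg * -β.im)) by
    rw [← Real.exp_add]; congr 1; ring]
  ring

end Stmt0Aux

end

open Stmt0Aux in
set_option maxHeartbeats 1000000 in
theorem stmt0 (α β : ℂ) (hαβ : -1 < (α + β).re) (p : ℝ) (hp : 1 ≤ p)
    (z : ℂ) (hz : ‖z‖ < 1) :
    (1 / (2 * Real.pi)) *
        (∫ θ in (0 : ℝ)..(2 * Real.pi),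
          ‖uab α β (z * Complex.exp (-(Complex.I * θ)))‖ ^ p) ≤
      Real.exp (p * Real.pi / 2 * |α.im - β.im|) *
        (Real.Gamma (p * ((α + β).re + 2) - 1) /
          Real.Gamma (p * ((α + β).re + 2) / 2) ^ 2) *
        (1 - ‖z‖ ^ 2) ^ (1 - p) := by
  have hπ : (0:ℝ) < 2*Real.pi := by positivity
  have h02 : (0:ℝ) ≤ 2*Real.pi := hπ.le
  set s : ℝ := (α+β).re with hs_def
  have hs1 : -1 < s := hαβ
  have hc : 1 < p * (s + 2) := by nlinarith
  set c : ℝ := p * (s + 2) with hc_def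
  set r : ℝ := ‖z‖ with hr_def
  have hr0 : 0 ≤ r := norm_nonneg z
  have h1x : 0 < 1 - r^2 := by nlinarith
  set E : ℝ := Real.exp (p * Real.pi / 2 * |α.im - β.im|) with hE_def
  have hE0 : 0 < E := Real.exp_pos _
  set w : ℝ → ℂ := fun θ => z * Complex.exp (-(Complex.I * θ)) with hw_def
  have habsw : ∀ θ : ℝ, ‖w θ‖ = r := by
    intro θ
    simp [hw_def, norm_mul, Complex.norm_exp, hr_def]
  have hw1 : ∀ θ : ℝ, ‖w θ‖ < 1 := fun θ => by rw [habsw]; exact hz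
  have hne : ∀ θ : ℝ, (1 : ℂ) - w θ ≠ 0 := by
    intro θ h
    have h2 := hw1 θ
    have h3 : w θ = 1 := by linear_combination -h
    rw [h3] at h2
    simp at h2
  have habs_pos : ∀ θ : ℝ, 0 < ‖1 - w θ‖ := fun θ => by
    simpa [norm_pos_iff] using hne θ
  -- pointwise bound
  have hpoint : ∀ θ : ℝ, ‖uab α β (w θ)‖ ^ p
      ≤ E * ((1-r^2) ^ (p*(s+1)) * (‖1 - w θ‖) ^ (-c)) := by
    intro θ
    rw [abs_uab α β (hw1 θ), habsw θ]
    have harg : |(1 - w θ).arg| ≤ Real.pi / 2 := by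
      rw [Complex.abs_arg_le_pi_div_two_iff]
      have h3 : (w θ).re ≤ |(w θ).re| := le_abs_self _
      have h2 := Complex.abs_re_le_norm (w θ)
      rw [habsw] at h2
      simp only [Complex.sub_re, Complex.one_re]
      linarith
    have h0p : 0 ≤ p := by linarith
    rw [Real.mul_rpow (by positivity) (Real.exp_pos _).le,
        Real.mul_rpow (by positivity) (by positivity)]
    rw [← Real.rpow_mul h1x.le, ← Real.rpow_mul (norm_nonneg _), ← Real.exp_mul]
    rw [show (s+1)*p = p*(s+1) from mul_comm _ _,
        show -(s+2)*p = -c from by rw [hc_def]; ring]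
    have hexp : Real.exp ((1 - w θ).arg * (α.im - β.im) * p) ≤ E := by
      rw [hE_def]
      apply Real.exp_le_exp.mpr
      calc (1 - w θ).arg * (α.im - β.im) * p ≤ |(1 - w θ).arg * (α.im - β.im)| * p :=
            mul_le_mul_of_nonneg_right (le_abs_self _) h0p
      _ = (|(1 - w θ).arg| * |α.im - β.im|) * p := by rw [abs_mul]
      _ ≤ (Real.pi / 2 * |α.im - β.im|) * p :=
            mul_le_mul_of_nonneg_right
              (mul_le_mul_of_nonneg_right harg (abs_nonneg _)) h0p
      _ = p * Real.pi / 2 * |α.im - β.im| := by ring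
    calc (1-r^2) ^ (p*(s+1)) * ‖1 - w θ‖ ^ (-c)
          * Real.exp ((1 - w θ).arg * (α.im - β.im) * p)
        ≤ (1-r^2) ^ (p*(s+1)) * ‖1 - w θ‖ ^ (-c) * E :=
          mul_le_mul_of_nonneg_left hexp (by positivity)
    _ = E * ((1-r^2) ^ (p*(s+1)) * ‖1 - w θ‖ ^ (-c)) := by ring
  -- continuity
  have hcw : Continuous w := by
    rw [hw_def]
    apply Continuous.mul continuous_const
    exact Complex.continuous_exp.comp (by continuity)
  have hc1 : Continuous fun θ => (1:ℂ) - w θ := continuous_const.sub hcw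
  have hcA : Continuous fun θ => ‖1 - w θ‖ := continuous_norm.comp hc1
  have h0p : 0 ≤ p := by linarith
  have hrepos : ∀ θ : ℝ, 0 < ((1:ℂ) - w θ).re := by
    intro θ
    have h3 : (w θ).re ≤ |(w θ).re| := le_abs_self _
    have h2 := Complex.abs_re_le_norm (w θ)
    rw [habsw] at h2
    simp only [Complex.sub_re, Complex.one_re]
    linarith
  have hcG : Continuous fun θ => E * ((1-r^2) ^ (p*(s+1)) * (‖1 - w θ‖) ^ (-c)) :=
    continuous_const.mul (continuous_const.mul
      (hcA.rpow_const (fun θ => Or.inl (habs_pos θ).ne')))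
  have hcontU : Continuous fun θ => uab α β (w θ) := by
    rw [show (fun θ => uab α β (w θ)) = fun θ =>
        ((((1 : ℝ) - ‖w θ‖ ^ 2 : ℝ) : ℂ) ^ (α + β + 1) *
          (1 - w θ) ^ (-(α + 1)) * (1 - (starRingEnd ℂ) (w θ)) ^ (-(β + 1))) from rfl]
    have hb1 : Continuous fun θ => (((1 : ℝ) - ‖w θ‖ ^ 2 : ℝ) : ℂ) :=
      Complex.continuous_ofReal.comp (continuous_const.sub ((continuous_norm.comp hcw).pow 2))
    have hf1 : Continuous fun θ => (((1 : ℝ) - ‖w θ‖ ^ 2 : ℝ) : ℂ) ^ (α + β + 1) := by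
      rw [continuous_iff_continuousAt]
      intro θ
      apply (continuousAt_cpow_const ?_).comp hb1.continuousAt
      rw [habsw]
      exact Complex.ofReal_mem_slitPlane.mpr h1x
    have hf2 : Continuous fun θ => ((1:ℂ) - w θ) ^ (-(α + 1)) := by
      rw [continuous_iff_continuousAt]
      intro θ
      apply (continuousAt_cpow_const ?_).comp hc1.continuousAt
      exact Or.inl (hrepos θ)
    have hf3 : Continuous fun θ => ((1:ℂ) - (starRingEnd ℂ) (w θ)) ^ (-(β + 1)) := by
      rw [continuous_iff_continuousAt]
      intro θ
      have hc3 : Continuous fun θ => (1:ℂ) - (starRingEnd ℂ) (w θ) :=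
        continuous_const.sub (Complex.continuous_conj.comp hcw)
      apply (continuousAt_cpow_const ?_).comp hc3.continuousAt
      left
      simp only [Complex.sub_re, Complex.one_re, Complex.conj_re]
      have := hrepos θ
      simp only [Complex.sub_re, Complex.one_re] at this
      linarith
    exact (hf1.mul hf2).mul hf3
  have hcF : Continuous fun θ => ‖uab α β (w θ)‖ ^ p :=
    (continuous_norm.comp hcontU).rpow_const (fun θ => Or.inr h0p)
  have hmono := intervalIntegral.integral_mono_on (μ := MeasureTheory.volume) h02
    (hcF.intervalIntegrable _ _) (hcG.intervalIntegrable _ _) (fun θ _ => hpoint θ)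
  have hGint : (∫ θ in (0:ℝ)..(2*Real.pi), E * ((1-r^2) ^ (p*(s+1))
        * (‖1 - w θ‖) ^ (-c)))
      = E * ((1-r^2) ^ (p*(s+1)) * ∫ θ in (0:ℝ)..(2*Real.pi),
          (‖1 - w θ‖) ^ (-c)) := by
    rw [intervalIntegral.integral_const_mul, intervalIntegral.integral_const_mul]
  have hkey2 : (∫ θ in (0:ℝ)..(2*Real.pi), (‖1 - w θ‖) ^ (-c))
      ≤ 2*Real.pi * ((Real.Gamma (c-1) / Real.Gamma (c/2)^2) * (1 - r^2) ^ (1-c)) := by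
    simp only [hw_def, hr_def]
    exact key_integral c hc hz
  have hLHS : (∫ θ in (0 : ℝ)..(2 * Real.pi),
        ‖uab α β (z * Complex.exp (-(Complex.I * θ)))‖ ^ p)
      = ∫ θ in (0 : ℝ)..(2 * Real.pi), ‖uab α β (w θ)‖ ^ p := by
    simp only [hw_def]
  rw [hLHS]
  set K : ℝ := Real.Gamma (c-1) / Real.Gamma (c/2)^2 with hK_def
  have hIpos : (0:ℝ) ≤ ∫ θ in (0:ℝ)..(2*Real.pi), (‖1 - w θ‖) ^ (-c) := by
    apply intervalIntegral.integral_nonneg h02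
    intro θ _
    positivity
  have hKpos : 0 ≤ K := by
    rw [hK_def]
    exact div_nonneg (Real.Gamma_pos_of_pos (by linarith : (0:ℝ) < c - 1)).le (sq_nonneg _)
  calc (1 / (2*Real.pi)) * (∫ θ in (0:ℝ)..(2*Real.pi), ‖uab α β (w θ)‖ ^ p)
      ≤ (1 / (2*Real.pi)) * (∫ θ in (0:ℝ)..(2*Real.pi), E * ((1-r^2) ^ (p*(s+1))
          * (‖1 - w θ‖) ^ (-c))) :=
        mul_le_mul_of_nonneg_left hmono (by positivity)
  _ = (1 / (2*Real.pi)) * (E * ((1-r^2) ^ (p*(s+1)) * ∫ θ in (0:ℝ)..(2*Real.pi),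
          (‖1 - w θ‖) ^ (-c))) := by rw [hGint]
  _ ≤ (1 / (2*Real.pi)) * (E * ((1-r^2) ^ (p*(s+1)) * (2*Real.pi * (K * (1 - r^2) ^ (1-c))))) := by
        apply mul_le_mul_of_nonneg_left _ (by positivity)
        apply mul_le_mul_of_nonneg_left _ hE0.le
        exact mul_le_mul_of_nonneg_left hkey2 (by positivity)
  _ = E * K * ((1-r^2) ^ (p*(s+1)) * (1 - r^2) ^ (1-c)) := by
        field_simp
  _ = E * K * (1 - r^2) ^ (1-p) := by
        rw [← Real.rpow_add h1x, show p*(s+1) + (1-c) = 1-p from by rw [hc_def]; ring]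
end

section
/- Let α, β ∈ ℂ ∖ {−1, −2, −3, …} with Re α + Re β > −1 and let φ : 𝕋 → ℂ be integrable on the unit circle. Then for every z ∈ 𝔻 the Wirtinger derivatives of P_{α,β}[φ] satisfy ∂P_{α,β}[φ](z) = c_{α,β} · (1/2π) ∫₀^{2π} ( −(α+β+1) conj(z)/(1 − |z|²) + (α+1) e^{−it}/(1 − z e^{−it}) ) · u_{α,β}(z e^{−it}) φ(e^{it}) dt and ∂̄P_{α,β}[φ](z) = c_{α,β} · (1/2π) ∫₀^{2π} ( −(α+β+1) z/(1 − |z|²) + (β+1) e^{it}/(1 − conj(z) e^{it}) ) · u_{α,β}(z e^{−it}) φ(e^{it}) dt. -/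
open MeasureTheory

noncomputable section AuxSection
open Complex Metric


abbrev conjCLM : ℂ →L[ℝ] ℂ := Complex.conjCLE.toContinuousLinearMap

def wl (a b : ℂ) : ℂ →L[ℝ] ℂ := a • ContinuousLinearMap.id ℝ ℂ + b • conjCLM

@[simp] lemma wl_apply (a b v : ℂ) : wl a b v = a * v + b * (starRingEnd ℂ) v := by
  simp [wl, conjCLM]

lemma wl_norm_le (a b : ℂ) : ‖wl a b‖ ≤ ‖a‖ + ‖b‖ := by
  refine ContinuousLinearMap.opNorm_le_bound _ (by positivity) fun v => ?_
  rw [wl_apply]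
  calc ‖a * v + b * (starRingEnd ℂ) v‖ ≤ ‖a * v‖ + ‖b * (starRingEnd ℂ) v‖ := norm_add_le _ _
    _ = ‖a‖ * ‖v‖ + ‖b‖ * ‖v‖ := by
        simp [map_mul]
    _ = (‖a‖ + ‖b‖) * ‖v‖ := by ring

lemma hasFDerivAt_cpow_comp {g : ℂ → ℂ} {L : ℂ →L[ℝ] ℂ} {x s : ℂ}
    (hg : HasFDerivAt g L x) (h : g x ∈ Complex.slitPlane) :
    HasFDerivAt (fun y => g y ^ s) ((s * g x ^ (s - 1)) • L) x := by
  have hf := (Complex.hasStrictDerivAt_cpow_const (c := s) h).hasDerivAt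
  have h2 := (hf.hasFDerivAt.restrictScalars ℝ).comp x hg
  refine h2.congr_fderiv ?_
  ext v
  simp [mul_comm]

lemma slit_of_one_sub {w : ℂ} (hw : ‖w‖ < 1) : (1 - w) ∈ Complex.slitPlane := by
  refine Or.inl ?_
  have : w.re ≤ ‖w‖ := Complex.re_le_norm w
  simp only [Complex.sub_re, Complex.one_re]
  linarith

lemma one_sub_ne {w : ℂ} (hw : ‖w‖ < 1) : (1 - w) ≠ 0 := by
  intro h
  have : w = 1 := by linear_combination -h
  simp [this] at hw

lemma hasFDerivAt_mulconj (x : ℂ) :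
    HasFDerivAt (fun y : ℂ => y * (starRingEnd ℂ) y) (wl ((starRingEnd ℂ) x) x) x := by
  have h1 : HasFDerivAt (fun y : ℂ => y) (ContinuousLinearMap.id ℝ ℂ) x := hasFDerivAt_id x
  have h2 : HasFDerivAt (fun y : ℂ => (starRingEnd ℂ) y) conjCLM x := by
    exact Complex.conjCLE.hasFDerivAt (x := x)
  have := h1.mul h2
  refine this.congr_fderiv ?_
  ext v
  simp [wl, Complex.conjCLE_apply]
  ring

lemma one_sub_mulconj (y : ℂ) :
    (((1:ℝ) - ‖y‖ ^ 2 : ℝ) : ℂ) = 1 - y * (starRingEnd ℂ) y := by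
  rw [Complex.mul_conj, ← Complex.sq_norm]
  push_cast
  ring

def cOne (α β : ℂ) (x e : ℂ) : ℂ :=
  (-(α + β + 1) * (starRingEnd ℂ) x / (1 - ((‖x‖ : ℂ)) ^ 2) +
    (α + 1) * e / (1 - x * e)) * uab α β (x * e)

def cTwo (α β : ℂ) (x e : ℂ) : ℂ :=
  (-(α + β + 1) * x / (1 - ((‖x‖ : ℂ)) ^ 2) +
    (β + 1) * (starRingEnd ℂ) e / (1 - (starRingEnd ℂ) x * (starRingEnd ℂ) e)) * uab α β (x * e)

lemma uab_eq (α β e : ℂ) (he : ‖e‖ = 1) (y : ℂ) :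
    uab α β (y * e) = (1 - y * (starRingEnd ℂ) y) ^ (α + β + 1) *
      (1 - y * e) ^ (-(α + 1)) *
      (1 - (starRingEnd ℂ) y * (starRingEnd ℂ) e) ^ (-(β + 1)) := by
  unfold uab
  rw [norm_mul, he, mul_one, map_mul (starRingEnd ℂ), one_sub_mulconj]

lemma hasFDerivAt_uab (α β : ℂ) (x e : ℂ) (hx : ‖x‖ < 1) (he : ‖e‖ = 1) :
    HasFDerivAt (fun y => uab α β (y * e)) (wl (cOne α β x e) (cTwo α β x e)) x := by
  have hxe : ‖x * e‖ < 1 := by rw [norm_mul, he, mul_one]; exact hx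
  have hxce : ‖(starRingEnd ℂ) x * (starRingEnd ℂ) e‖ < 1 := by
    rw [norm_mul, Complex.norm_conj, Complex.norm_conj, he, mul_one]; exact hx
  have hxx : ‖x * (starRingEnd ℂ) x‖ < 1 := by
    rw [norm_mul, Complex.norm_conj]
    nlinarith [norm_nonneg x]
  -- the three bases
  set w₀ : ℂ := 1 - x * (starRingEnd ℂ) x with hw₀
  set q₀ : ℂ := 1 - x * e with hq₀
  set r₀ : ℂ := 1 - (starRingEnd ℂ) x * (starRingEnd ℂ) e with hr₀
  have hw₀s : w₀ ∈ Complex.slitPlane := slit_of_one_sub hxx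
  have hq₀s : q₀ ∈ Complex.slitPlane := slit_of_one_sub hxe
  have hr₀s : r₀ ∈ Complex.slitPlane := slit_of_one_sub hxce
  have hw₀n : w₀ ≠ 0 := one_sub_ne hxx
  have hq₀n : q₀ ≠ 0 := one_sub_ne hxe
  have hr₀n : r₀ ≠ 0 := one_sub_ne hxce
  -- derivatives of the three factors
  have hA : HasFDerivAt (fun y : ℂ => (1 - y * (starRingEnd ℂ) y) ^ (α + β + 1))
      (((α + β + 1) * w₀ ^ (α + β + 1 - 1)) • (wl (-(starRingEnd ℂ) x) (-x))) x := by
    have hin : HasFDerivAt (fun y : ℂ => 1 - y * (starRingEnd ℂ) y)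
        (wl (-(starRingEnd ℂ) x) (-x)) x := by
      have := (hasFDerivAt_const (1:ℂ) x).sub (hasFDerivAt_mulconj x)
      refine this.congr_fderiv ?_
      ext v; simp; ring
    exact hasFDerivAt_cpow_comp hin hw₀s
  have hB : HasFDerivAt (fun y : ℂ => (1 - y * e) ^ (-(α + 1)))
      ((-(α + 1) * q₀ ^ (-(α + 1) - 1)) • (wl (-e) 0)) x := by
    have hin : HasFDerivAt (fun y : ℂ => 1 - y * e) (wl (-e) 0) x := by
      have := (hasFDerivAt_const (𝕜 := ℝ) (1:ℂ) x).sub ((hasFDerivAt_id (𝕜 := ℝ) x).mul_const e)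
      refine this.congr_fderiv ?_
      ext v; simp
    exact hasFDerivAt_cpow_comp hin hq₀s
  have hC : HasFDerivAt (fun y : ℂ => (1 - (starRingEnd ℂ) y * (starRingEnd ℂ) e) ^ (-(β + 1)))
      ((-(β + 1) * r₀ ^ (-(β + 1) - 1)) • (wl 0 (-(starRingEnd ℂ) e))) x := by
    have hconj : HasFDerivAt (fun y : ℂ => (starRingEnd ℂ) y) conjCLM x := by
      exact Complex.conjCLE.hasFDerivAt (x := x)
    have hin : HasFDerivAt (fun y : ℂ => 1 - (starRingEnd ℂ) y * (starRingEnd ℂ) e)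
        (wl 0 (-(starRingEnd ℂ) e)) x := by
      have := (hasFDerivAt_const (𝕜 := ℝ) (1:ℂ) x).sub (hconj.mul_const ((starRingEnd ℂ) e))
      refine this.congr_fderiv ?_
      ext v; simp [Complex.conjCLE_apply]
    exact hasFDerivAt_cpow_comp hin hr₀s
  have hprod := (hA.mul hB).mul hC
  have heq : (fun y => uab α β (y * e)) = fun y =>
      (1 - y * (starRingEnd ℂ) y) ^ (α + β + 1) * (1 - y * e) ^ (-(α + 1)) *
        (1 - (starRingEnd ℂ) y * (starRingEnd ℂ) e) ^ (-(β + 1)) := by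
    funext y; exact uab_eq α β e he y
  rw [heq]
  refine hprod.congr_fderiv ?_
  -- now prove CLM equality
  have habs : (1 : ℂ) - ((‖x‖ : ℂ)) ^ 2 = w₀ := by
    rw [hw₀, ← one_sub_mulconj]; push_cast; ring
  have huab : uab α β (x * e) = w₀ ^ (α + β + 1) * q₀ ^ (-(α + 1)) * r₀ ^ (-(β + 1)) :=
    uab_eq α β e he x
  have hwsub : w₀ ^ (α + β + 1 - 1) = w₀ ^ (α + β + 1) / w₀ := by
    rw [Complex.cpow_sub _ _ hw₀n, Complex.cpow_one]
  have hqsub : q₀ ^ (-(α + 1) - 1) = q₀ ^ (-(α + 1)) / q₀ := by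
    rw [Complex.cpow_sub _ _ hq₀n, Complex.cpow_one]
  have hrsub : r₀ ^ (-(β + 1) - 1) = r₀ ^ (-(β + 1)) / r₀ := by
    rw [Complex.cpow_sub _ _ hr₀n, Complex.cpow_one]
  ext v
  simp only [wl_apply, ContinuousLinearMap.add_apply, ContinuousLinearMap.smul_apply,
    ContinuousLinearMap.coe_smul', Pi.smul_apply, smul_eq_mul]
  rw [cOne, cTwo, huab, habs, hwsub, hqsub, hrsub]
  simp only [Pi.mul_apply]
  rw [← hw₀, ← hq₀, ← hr₀]
  field_simp
  ring

lemma continuousAt_uab (α β : ℂ) (w : ℂ) (hw : ‖w‖ < 1) :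
    ContinuousAt (uab α β) w := by
  have h := (hasFDerivAt_uab α β w 1 hw (by simp)).continuousAt
  simpa [mul_one] using h

lemma exists_bound (α β : ℂ) (r : ℝ) (hr : r < 1) :
    ∃ M : ℝ, 0 ≤ M ∧ ∀ x e : ℂ, ‖x‖ ≤ r → ‖e‖ = 1 →
      ‖cOne α β x e‖ + ‖cTwo α β x e‖ ≤ M := by
  set K : Set (ℂ × ℂ) := Metric.closedBall (0:ℂ) r ×ˢ Metric.sphere (0:ℂ) 1
  have hK : IsCompact K := (isCompact_closedBall _ _).prod (isCompact_sphere _ _)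
  have hmem : ∀ p ∈ K, ‖p.1‖ ≤ r ∧ ‖p.2‖ = 1 := by
    intro p hp
    obtain ⟨h1, h2⟩ := hp
    rw [mem_closedBall_zero_iff] at h1
    rw [mem_sphere_zero_iff_norm] at h2
    exact ⟨h1, h2⟩
  have habs : ∀ p ∈ K, ‖p.1‖ < 1 ∧ ‖p.1 * p.2‖ < 1 ∧
      ‖(starRingEnd ℂ) p.1 * (starRingEnd ℂ) p.2‖ < 1 := by
    intro p hp
    obtain ⟨h1, h2⟩ := hmem p hp
    have hp1 : ‖p.1‖ < 1 := lt_of_le_of_lt h1 hr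
    refine ⟨hp1, ?_, ?_⟩
    · rw [norm_mul, h2, mul_one]; exact hp1
    · rw [norm_mul, Complex.norm_conj, Complex.norm_conj, h2, mul_one]; exact hp1
  have hmulc : ∀ p : ℂ × ℂ, ContinuousAt (fun q : ℂ × ℂ => q.1 * q.2) p :=
    fun p => (continuous_fst.mul continuous_snd).continuousAt
  have hcu : ∀ p ∈ K, ContinuousAt (fun p : ℂ × ℂ => uab α β (p.1 * p.2)) p := by
    intro p hp
    exact ContinuousAt.comp (f := fun q : ℂ × ℂ => q.1 * q.2)
      (continuousAt_uab α β _ (habs p hp).2.1) (hmulc p)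
  have hc1 : ContinuousOn (fun p : ℂ × ℂ => cOne α β p.1 p.2) K := by
    intro p hp
    obtain ⟨hp1, -, -⟩ := habs p hp
    have hden1 : (1 : ℂ) - ((‖p.1‖ : ℂ)) ^ 2 ≠ 0 := by
      rw [show ((1:ℂ) - ((‖p.1‖ : ℂ))^2) = (((1 - ‖p.1‖ ^2 : ℝ)):ℂ) by push_cast; ring]
      rw [Ne, Complex.ofReal_eq_zero]
      nlinarith [norm_nonneg p.1]
    have hden2 : (1 : ℂ) - p.1 * p.2 ≠ 0 := one_sub_ne (habs p hp).2.1
    apply ContinuousAt.continuousWithinAt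
    unfold cOne
    apply ContinuousAt.mul
    · apply ContinuousAt.add
      · exact ContinuousAt.div
          (continuousAt_const.mul (Complex.continuous_conj.comp continuous_fst).continuousAt)
          (continuousAt_const.sub (((Complex.continuous_ofReal.comp
            (continuous_norm.comp continuous_fst)).pow 2).continuousAt)) hden1
      · exact ContinuousAt.div (continuousAt_const.mul continuous_snd.continuousAt)
          (continuousAt_const.sub (continuous_fst.mul continuous_snd).continuousAt) hden2
    · exact hcu p hp
  have hc2 : ContinuousOn (fun p : ℂ × ℂ => cTwo α β p.1 p.2) K := by
    intro p hp
    obtain ⟨hp1, -, hcc⟩ := habs p hp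
    have hden1 : (1 : ℂ) - ((‖p.1‖ : ℂ)) ^ 2 ≠ 0 := by
      rw [show ((1:ℂ) - ((‖p.1‖ : ℂ))^2) = (((1 - ‖p.1‖ ^2 : ℝ)):ℂ) by push_cast; ring]
      rw [Ne, Complex.ofReal_eq_zero]
      nlinarith [norm_nonneg p.1]
    have hden2 : (1 : ℂ) - (starRingEnd ℂ) p.1 * (starRingEnd ℂ) p.2 ≠ 0 := one_sub_ne hcc
    apply ContinuousAt.continuousWithinAt
    unfold cTwo
    apply ContinuousAt.mul
    · apply ContinuousAt.add
      · exact ContinuousAt.div (continuousAt_const.mul continuous_fst.continuousAt)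
          (continuousAt_const.sub (((Complex.continuous_ofReal.comp
            (continuous_norm.comp continuous_fst)).pow 2).continuousAt)) hden1
      · exact ContinuousAt.div
          (continuousAt_const.mul (Complex.continuous_conj.comp continuous_snd).continuousAt)
          (continuousAt_const.sub ((Complex.continuous_conj.comp continuous_fst).mul
            (Complex.continuous_conj.comp continuous_snd)).continuousAt) hden2
    · exact hcu p hp
  have hch : ContinuousOn (fun p : ℂ × ℂ =>
      ‖cOne α β p.1 p.2‖ + ‖cTwo α β p.1 p.2‖) K :=
    ((continuous_norm.comp_continuousOn hc1).add
      (continuous_norm.comp_continuousOn hc2))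
  obtain ⟨C, hC⟩ := hK.exists_bound_of_continuousOn hch
  refine ⟨max C 0, le_max_right _ _, fun x e hx he => ?_⟩
  have hpK : (x, e) ∈ K := by
    constructor
    · rw [mem_closedBall_zero_iff]; exact hx
    · rw [mem_sphere_zero_iff_norm]; exact he
  have := hC (x, e) hpK
  have h2 : ‖cOne α β x e‖ + ‖cTwo α β x e‖ ≤
      ‖‖cOne α β x e‖ + ‖cTwo α β x e‖‖ := le_abs_self _
  exact le_trans (le_trans h2 this) (le_max_left _ _)

lemma intervalIntegrable_clm_apply {a b : ℝ} {f : ℝ → ℂ →L[ℝ] ℂ}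
    (hf : IntervalIntegrable f volume a b) (v : ℂ) :
    IntervalIntegrable (fun t => f t v) volume a b :=
  ⟨(ContinuousLinearMap.apply ℝ ℂ v).integrable_comp hf.1,
   (ContinuousLinearMap.apply ℝ ℂ v).integrable_comp hf.2⟩

lemma intervalIntegral_clm_apply {a b : ℝ} {f : ℝ → ℂ →L[ℝ] ℂ}
    (hf : IntervalIntegrable f volume a b) (v : ℂ) :
    (∫ t in a..b, f t) v = ∫ t in a..b, f t v := by
  rw [intervalIntegral, intervalIntegral, ContinuousLinearMap.sub_apply,
    ContinuousLinearMap.integral_apply hf.1, ContinuousLinearMap.integral_apply hf.2]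

def eef (t : ℝ) : ℂ := Complex.exp (-(Complex.I * t))

def FF' (α β : ℂ) (φ : ℂ → ℂ) (z : ℂ) (t : ℝ) : ℂ →L[ℝ] ℂ :=
  φ (Complex.exp (Complex.I * t)) • wl (cOne α β z (eef t)) (cTwo α β z (eef t))

lemma eef_abs (t : ℝ) : ‖eef t‖ = 1 := by
  simp [eef, Complex.norm_exp]

lemma eef_conj (t : ℝ) : (starRingEnd ℂ) (eef t) = Complex.exp (Complex.I * t) := by
  rw [eef, ← Complex.exp_conj]
  congr 1
  simp

lemma eef_cont : Continuous eef :=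
  Complex.continuous_exp.comp ((continuous_const.mul Complex.continuous_ofReal).neg)


end AuxSection

open Complex Metric in
theorem stmt1 (α β : ℂ) (hα : notNegInt α) (hβ : notNegInt β)
    (hαβ : -1 < (α + β).re) (φ : ℂ → ℂ)
    (hφ : IntervalIntegrable (fun t : ℝ => φ (Complex.exp (Complex.I * t)))
      volume 0 (2 * Real.pi))
    (z : ℂ) (hz : ‖z‖ < 1) :
    wdz (Pab α β φ) z =
        cab α β * ((1 / (2 * Real.pi) : ℝ) : ℂ) *
          ∫ t in (0 : ℝ)..(2 * Real.pi),
            (-(α + β + 1) * (starRingEnd ℂ) z / (1 - ((‖z‖ : ℂ)) ^ 2) +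
                (α + 1) * Complex.exp (-(Complex.I * t)) /
                  (1 - z * Complex.exp (-(Complex.I * t)))) *
              uab α β (z * Complex.exp (-(Complex.I * t))) * φ (Complex.exp (Complex.I * t)) ∧
      wdzbar (Pab α β φ) z =
        cab α β * ((1 / (2 * Real.pi) : ℝ) : ℂ) *
          ∫ t in (0 : ℝ)..(2 * Real.pi),
            (-(α + β + 1) * z / (1 - ((‖z‖ : ℂ)) ^ 2) +
                (β + 1) * Complex.exp (Complex.I * t) /
                  (1 - (starRingEnd ℂ) z * Complex.exp (Complex.I * t))) *
              uab α β (z * Complex.exp (-(Complex.I * t))) * φ (Complex.exp (Complex.I * t)) := by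
  have hε : (0:ℝ) < (1 - ‖z‖) / 2 := by linarith
  set ε := (1 - ‖z‖) / 2 with hεdef
  set r := (1 + ‖z‖) / 2 with hrdef
  have hr1 : r < 1 := by rw [hrdef]; linarith
  have hxr : ∀ x ∈ Metric.ball z ε, ‖x‖ ≤ r ∧ ‖x‖ < 1 := by
    intro x hx
    have hd : dist x z < ε := Metric.mem_ball.mp hx
    have h1 : ‖x‖ - ‖z‖ ≤ dist x z := by
      rw [dist_eq_norm]
      exact norm_sub_norm_le x z
    have : ‖x‖ ≤ r := by rw [hrdef]; rw [hεdef] at hd; linarith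
    exact ⟨this, lt_of_le_of_lt this hr1⟩
  obtain ⟨M, hM0, hM⟩ := exists_bound α β r hr1
  have hφm : AEStronglyMeasurable (fun t : ℝ => φ (Complex.exp (Complex.I * t)))
      (volume.restrict (Set.uIoc 0 (2*Real.pi))) :=
    (intervalIntegrable_iff.1 hφ).aestronglyMeasurable
  have hcontu : ∀ x : ℂ, ‖x‖ < 1 → Continuous fun t : ℝ => uab α β (x * eef t) := by
    intro x hx
    rw [continuous_iff_continuousAt]
    intro t
    have h1 : ContinuousAt (fun t : ℝ => x * eef t) t := (continuous_const.mul eef_cont).continuousAt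
    have hx2 : ‖x * eef t‖ < 1 := by rw [norm_mul, eef_abs, mul_one]; exact hx
    exact ContinuousAt.comp (f := fun t : ℝ => x * eef t) (continuousAt_uab α β _ hx2) h1
  have hF_meas : ∀ᶠ x in nhds z, AEStronglyMeasurable
      (fun t : ℝ => uab α β (x * eef t) * φ (Complex.exp (Complex.I * t)))
      (volume.restrict (Set.uIoc 0 (2*Real.pi))) := by
    filter_upwards [Metric.ball_mem_nhds z hε] with x hx
    exact ((hcontu x (hxr x hx).2).aestronglyMeasurable).mul hφm
  have hF_int : IntervalIntegrable
      (fun t : ℝ => uab α β (z * eef t) * φ (Complex.exp (Complex.I * t))) volume 0 (2*Real.pi) :=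
    hφ.continuousOn_mul ((hcontu z hz).continuousOn)
  have hc1cont : Continuous fun t : ℝ => cOne α β z (eef t) := by
    rw [continuous_iff_continuousAt]
    intro t
    have hu : ContinuousAt (fun t : ℝ => uab α β (z * eef t)) t := (hcontu z hz).continuousAt
    have hden2 : (1:ℂ) - z * eef t ≠ 0 :=
      one_sub_ne (by rw [norm_mul, eef_abs, mul_one]; exact hz)
    unfold cOne
    exact (ContinuousAt.add continuousAt_const
      (ContinuousAt.div (continuousAt_const.mul eef_cont.continuousAt)
        (continuousAt_const.sub (continuous_const.mul eef_cont).continuousAt) hden2)).mul hu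
  have hc2cont : Continuous fun t : ℝ => cTwo α β z (eef t) := by
    rw [continuous_iff_continuousAt]
    intro t
    have hu : ContinuousAt (fun t : ℝ => uab α β (z * eef t)) t := (hcontu z hz).continuousAt
    have hden2 : (1:ℂ) - (starRingEnd ℂ) z * (starRingEnd ℂ) (eef t) ≠ 0 := by
      apply one_sub_ne
      rw [norm_mul, Complex.norm_conj, Complex.norm_conj, eef_abs, mul_one]
      exact hz
    unfold cTwo
    exact (ContinuousAt.add continuousAt_const
      (ContinuousAt.div
        (continuousAt_const.mul (Complex.continuous_conj.comp eef_cont).continuousAt)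
        (continuousAt_const.sub
          (continuous_const.mul (Complex.continuous_conj.comp eef_cont)).continuousAt)
        hden2)).mul hu
  have hWcont : Continuous fun t : ℝ => wl (cOne α β z (eef t)) (cTwo α β z (eef t)) := by
    unfold wl
    exact (hc1cont.smul continuous_const).add (hc2cont.smul continuous_const)
  have hF'_meas : AEStronglyMeasurable (FF' α β φ z) (volume.restrict (Set.uIoc 0 (2*Real.pi))) := by
    unfold FF'
    exact hφm.smul hWcont.aestronglyMeasurable
  have hbound_int : IntervalIntegrable
      (fun t => M * ‖φ (Complex.exp (Complex.I * t))‖) volume 0 (2*Real.pi) := by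
    have := (hφ.norm).const_mul M
    simpa using this
  have h_lip : ∀ᵐ t ∂volume, t ∈ Set.uIoc (0:ℝ) (2*Real.pi) →
      LipschitzOnWith (Real.nnabs (M * ‖φ (Complex.exp (Complex.I * t))‖))
        (fun x => uab α β (x * eef t) * φ (Complex.exp (Complex.I * t))) (Metric.ball z ε) := by
    refine Filter.Eventually.of_forall (fun t _ => ?_)
    apply Convex.lipschitzOnWith_of_nnnorm_hasFDerivWithin_le
      (f' := fun x => φ (Complex.exp (Complex.I * t)) • wl (cOne α β x (eef t)) (cTwo α β x (eef t)))
      ?_ ?_ (convex_ball z ε)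
    · intro x hx
      exact ((hasFDerivAt_uab α β x (eef t) (hxr x hx).2 (eef_abs t)).mul_const
        (φ (Complex.exp (Complex.I * t)))).hasFDerivWithinAt
    · intro x hx
      rw [← NNReal.coe_le_coe, coe_nnnorm, Real.coe_nnabs]
      have h1 : ‖φ (Complex.exp (Complex.I * t)) • wl (cOne α β x (eef t)) (cTwo α β x (eef t))‖ ≤
          ‖φ (Complex.exp (Complex.I * t))‖ *
            (‖cOne α β x (eef t)‖ + ‖cTwo α β x (eef t)‖) := by
        refine le_trans (ContinuousLinearMap.opNorm_smul_le _ _) ?_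
        exact mul_le_mul_of_nonneg_left (wl_norm_le _ _) (norm_nonneg _)
      have h2 : ‖cOne α β x (eef t)‖ + ‖cTwo α β x (eef t)‖ ≤ M :=
        hM x (eef t) (hxr x hx).1 (eef_abs t)
      have h3 : ‖φ (Complex.exp (Complex.I * t))‖ *
          (‖cOne α β x (eef t)‖ + ‖cTwo α β x (eef t)‖) ≤
          M * ‖φ (Complex.exp (Complex.I * t))‖ := by
        rw [mul_comm M]
        exact mul_le_mul_of_nonneg_left h2 (norm_nonneg _)
      exact le_trans (le_trans h1 h3) (le_abs_self _)
  have h_diff : ∀ᵐ t ∂volume, t ∈ Set.uIoc (0:ℝ) (2*Real.pi) →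
      HasFDerivAt (fun x => uab α β (x * eef t) * φ (Complex.exp (Complex.I * t)))
        (FF' α β φ z t) z :=
    Filter.Eventually.of_forall (fun t _ =>
      (hasFDerivAt_uab α β z (eef t) hz (eef_abs t)).mul_const _)
  obtain ⟨hFint', hder⟩ := intervalIntegral.hasFDerivAt_integral_of_dominated_loc_of_lip (Metric.ball_mem_nhds z hε)
    hF_meas hF_int hF'_meas h_lip hbound_int h_diff
  set c : ℂ := cab α β * ((1 / (2 * Real.pi) : ℝ) : ℂ) with hc
  have hPab : Pab α β φ = fun w => c *
      ∫ t in (0:ℝ)..(2*Real.pi), uab α β (w * eef t) * φ (Complex.exp (Complex.I * t)) := rfl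
  have hK : HasFDerivAt (Pab α β φ)
      (c • ∫ t in (0:ℝ)..(2*Real.pi), FF' α β φ z t) z := by
    rw [hPab]
    exact hder.const_mul c
  have hfd := hK.fderiv
  have hint1 : IntervalIntegrable (fun t => FF' α β φ z t 1) volume 0 (2*Real.pi) :=
    intervalIntegrable_clm_apply hFint' 1
  have hintI : IntervalIntegrable (fun t => FF' α β φ z t Complex.I) volume 0 (2*Real.pi) :=
    intervalIntegrable_clm_apply hFint' Complex.I
  have happ1 : (∫ t in (0:ℝ)..(2*Real.pi), FF' α β φ z t) 1
      = ∫ t in (0:ℝ)..(2*Real.pi), FF' α β φ z t 1 := intervalIntegral_clm_apply hFint' 1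
  have happI : (∫ t in (0:ℝ)..(2*Real.pi), FF' α β φ z t) Complex.I
      = ∫ t in (0:ℝ)..(2*Real.pi), FF' α β φ z t Complex.I :=
    intervalIntegral_clm_apply hFint' Complex.I
  constructor
  · show (fderiv ℝ (Pab α β φ) z 1 - Complex.I * fderiv ℝ (Pab α β φ) z Complex.I) / 2 = _
    rw [hfd, ContinuousLinearMap.smul_apply, ContinuousLinearMap.smul_apply, happ1, happI,
      smul_eq_mul, smul_eq_mul]
    have hIB : Complex.I * ∫ t in (0:ℝ)..(2*Real.pi), FF' α β φ z t Complex.I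
        = ∫ t in (0:ℝ)..(2*Real.pi), Complex.I * FF' α β φ z t Complex.I :=
      (intervalIntegral.integral_const_mul _ _).symm
    have hsub : (∫ t in (0:ℝ)..(2*Real.pi), FF' α β φ z t 1) -
        ∫ t in (0:ℝ)..(2*Real.pi), Complex.I * FF' α β φ z t Complex.I
        = ∫ t in (0:ℝ)..(2*Real.pi), (FF' α β φ z t 1 - Complex.I * FF' α β φ z t Complex.I) :=
      (intervalIntegral.integral_sub hint1 (hintI.const_mul Complex.I)).symm
    have hdiv : (∫ t in (0:ℝ)..(2*Real.pi),
          (FF' α β φ z t 1 - Complex.I * FF' α β φ z t Complex.I)) / 2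
        = ∫ t in (0:ℝ)..(2*Real.pi),
          (FF' α β φ z t 1 - Complex.I * FF' α β φ z t Complex.I) / 2 :=
      (intervalIntegral.integral_div _ _).symm
    have hcongr : (∫ t in (0:ℝ)..(2*Real.pi),
          (FF' α β φ z t 1 - Complex.I * FF' α β φ z t Complex.I) / 2)
        = ∫ t in (0:ℝ)..(2*Real.pi),
            (-(α + β + 1) * (starRingEnd ℂ) z / (1 - ((‖z‖ : ℂ)) ^ 2) +
                (α + 1) * Complex.exp (-(Complex.I * t)) /
                  (1 - z * Complex.exp (-(Complex.I * t)))) *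
              uab α β (z * Complex.exp (-(Complex.I * t))) * φ (Complex.exp (Complex.I * t)) := by
      apply intervalIntegral.integral_congr
      intro t _
      have hR : (-(α + β + 1) * (starRingEnd ℂ) z / (1 - ((‖z‖ : ℂ)) ^ 2) +
            (α + 1) * Complex.exp (-(Complex.I * (t:ℝ))) /
              (1 - z * Complex.exp (-(Complex.I * (t:ℝ))))) *
          uab α β (z * Complex.exp (-(Complex.I * (t:ℝ))))
          = cOne α β z (eef t) := by
        unfold cOne eef
        norm_num
      dsimp only
      rw [hR]
      simp only [FF', ContinuousLinearMap.smul_apply, wl_apply, smul_eq_mul, map_one,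
        Complex.conj_I, mul_one]
      linear_combination (φ (Complex.exp (Complex.I * (t:ℝ))) * cTwo α β z (eef t) -
        φ (Complex.exp (Complex.I * (t:ℝ))) * cOne α β z (eef t)) / 2 * Complex.I_mul_I
    rw [← hcongr, ← hdiv, ← hsub, ← hIB]
    ring
  · show (fderiv ℝ (Pab α β φ) z 1 + Complex.I * fderiv ℝ (Pab α β φ) z Complex.I) / 2 = _
    rw [hfd, ContinuousLinearMap.smul_apply, ContinuousLinearMap.smul_apply, happ1, happI,
      smul_eq_mul, smul_eq_mul]
    have hIB : Complex.I * ∫ t in (0:ℝ)..(2*Real.pi), FF' α β φ z t Complex.I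
        = ∫ t in (0:ℝ)..(2*Real.pi), Complex.I * FF' α β φ z t Complex.I :=
      (intervalIntegral.integral_const_mul _ _).symm
    have hadd : (∫ t in (0:ℝ)..(2*Real.pi), FF' α β φ z t 1) +
        ∫ t in (0:ℝ)..(2*Real.pi), Complex.I * FF' α β φ z t Complex.I
        = ∫ t in (0:ℝ)..(2*Real.pi), (FF' α β φ z t 1 + Complex.I * FF' α β φ z t Complex.I) :=
      (intervalIntegral.integral_add hint1 (hintI.const_mul Complex.I)).symm
    have hdiv : (∫ t in (0:ℝ)..(2*Real.pi),
          (FF' α β φ z t 1 + Complex.I * FF' α β φ z t Complex.I)) / 2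
        = ∫ t in (0:ℝ)..(2*Real.pi),
          (FF' α β φ z t 1 + Complex.I * FF' α β φ z t Complex.I) / 2 :=
      (intervalIntegral.integral_div _ _).symm
    have hcongr : (∫ t in (0:ℝ)..(2*Real.pi),
          (FF' α β φ z t 1 + Complex.I * FF' α β φ z t Complex.I) / 2)
        = ∫ t in (0:ℝ)..(2*Real.pi),
            (-(α + β + 1) * z / (1 - ((‖z‖ : ℂ)) ^ 2) +
                (β + 1) * Complex.exp (Complex.I * t) /
                  (1 - (starRingEnd ℂ) z * Complex.exp (Complex.I * t))) *
              uab α β (z * Complex.exp (-(Complex.I * t))) * φ (Complex.exp (Complex.I * t)) := by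
      apply intervalIntegral.integral_congr
      intro t _
      have hR : (-(α + β + 1) * z / (1 - ((‖z‖ : ℂ)) ^ 2) +
            (β + 1) * Complex.exp (Complex.I * (t:ℝ)) /
              (1 - (starRingEnd ℂ) z * Complex.exp (Complex.I * (t:ℝ)))) *
          uab α β (z * Complex.exp (-(Complex.I * (t:ℝ))))
          = cTwo α β z (eef t) := by
        simp only [cTwo, eef_conj]
        unfold eef
        norm_num
      dsimp only
      rw [hR]
      simp only [FF', ContinuousLinearMap.smul_apply, wl_apply, smul_eq_mul, map_one,
        Complex.conj_I, mul_one]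
      linear_combination (φ (Complex.exp (Complex.I * (t:ℝ))) * cOne α β z (eef t) -
        φ (Complex.exp (Complex.I * (t:ℝ))) * cTwo α β z (eef t)) / 2 * Complex.I_mul_I
    rw [← hcongr, ← hdiv, ← hadd, ← hIB]
    ring
end

section
/- Let α, β ∈ ℂ ∖ {−1, −2, −3, …} with Re α + Re β > −1 and set λ₁ = |α+1|, λ₂ = |β+1|. Then the supremum of ‖DP_{α,β}[φ](0)‖ over all essentially bounded φ : 𝕋 → ℂ with ‖φ‖_∞ ≤ 1 equals (2 |c_{α,β}| (λ₁ + λ₂)/π) · E( 2√(λ₁λ₂)/(λ₁ + λ₂) ), where E(k) = ∫₀^{π/2} √(1 − k² sin² t) dt is the complete elliptic integral of the second kind. In particular, ‖DP_{α,β}[φ](0)‖ ≤ (2 |c_{α,β}| (λ₁ + λ₂)/π) · E( 2√(λ₁λ₂)/(λ₁ + λ₂) ) · ‖φ‖_∞ for all φ ∈ L^∞(𝕋), and this constant is best possible. -/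
open MeasureTheory

noncomputable section

abbrev Complex.abs : AbsoluteValue ℂ ℝ where
  toFun z := ‖z‖
  map_mul' := norm_mul
  nonneg' := norm_nonneg
  eq_zero' _ := norm_eq_zero
  add_le' := norm_add_le

lemma Complex.norm_eq_abs (z : ℂ) : ‖z‖ = Complex.abs z := rfl
lemma Complex.abs_apply (z : ℂ) : Complex.abs z = Real.sqrt (Complex.normSq z) := Complex.norm_def z
lemma Complex.abs_ofReal (r : ℝ) : Complex.abs r = |r| := by
  rw [← Complex.norm_eq_abs, Complex.norm_real, Real.norm_eq_abs]
lemma Complex.abs_conj (z : ℂ) : Complex.abs ((starRingEnd ℂ) z) = Complex.abs z := Complex.norm_conj z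
lemma Complex.continuous_abs : Continuous Complex.abs := continuous_norm
lemma Complex.abs_exp (z : ℂ) : Complex.abs (Complex.exp z) = Real.exp z.re := Complex.norm_exp z
lemma Complex.sq_abs (z : ℂ) : Complex.abs z ^ 2 = Complex.normSq z := Complex.sq_norm z
lemma Complex.abs_re_le_abs (z : ℂ) : |z.re| ≤ Complex.abs z := Complex.abs_re_le_norm z
lemma Complex.normSq_eq_abs (z : ℂ) : Complex.normSq z = Complex.abs z ^ 2 :=
  Complex.normSq_eq_norm_sq z
lemma Complex.re_le_abs (z : ℂ) : z.re ≤ Complex.abs z := Complex.re_le_norm z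
lemma Complex.abs_mul_exp_arg_mul_I (z : ℂ) :
    ((Complex.abs z : ℝ) : ℂ) * Complex.exp (z.arg * Complex.I) = z :=
  Complex.norm_mul_exp_arg_mul_I z




def idC : ℂ →L[ℝ] ℂ := ContinuousLinearMap.id ℝ ℂ
def conjC : ℂ →L[ℝ] ℂ := Complex.conjCLE.toContinuousLinearMap

def Lm (p q : ℂ) : ℂ →L[ℝ] ℂ := p • idC + q • conjC

@[simp] lemma Lm_apply (p q v : ℂ) : Lm p q v = p * v + q * (starRingEnd ℂ) v := by
  simp [Lm, idC, conjC, Complex.conjCLE_apply]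

lemma clm_ext_aux {L M : ℂ →L[ℝ] ℂ} (h : ∀ v, L v = M v) : L = M :=
  ContinuousLinearMap.ext h

lemma Lm_norm_le (p q : ℂ) : ‖Lm p q‖ ≤ Complex.abs p + Complex.abs q := by
  apply ContinuousLinearMap.opNorm_le_bound _ (by positivity)
  intro v
  rw [Lm_apply]
  calc ‖p * v + q * (starRingEnd ℂ) v‖ ≤ ‖p * v‖ + ‖q * (starRingEnd ℂ) v‖ := norm_add_le _ _
    _ = Complex.abs p * ‖v‖ + Complex.abs q * ‖v‖ := by
        rw [norm_mul, norm_mul, Complex.norm_conj]; rfl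
    _ = (Complex.abs p + Complex.abs q) * ‖v‖ := by ring

def mz (z : ℂ) : ℂ := (((1 : ℝ) - Complex.abs z ^ 2 : ℝ) : ℂ)

def Pf (α β : ℂ) (z : ℂ) : ℂ :=
  -((α+β+1) * mz z ^ (α+β) * (starRingEnd ℂ) z) * (1-z)^(-(α+1))
      * (1-(starRingEnd ℂ) z)^(-(β+1))
    + (α+1) * (1-z)^(-(α+2)) * mz z ^ (α+β+1) * (1-(starRingEnd ℂ) z)^(-(β+1))

def Qf (α β : ℂ) (z : ℂ) : ℂ :=
  -((α+β+1) * mz z ^ (α+β) * z) * (1-z)^(-(α+1)) * (1-(starRingEnd ℂ) z)^(-(β+1))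
    + (β+1) * (1-(starRingEnd ℂ) z)^(-(β+2)) * mz z ^ (α+β+1) * (1-z)^(-(α+1))

lemma mz_eq (w : ℂ) : mz w = 1 - w * (starRingEnd ℂ) w := by
  rw [mz, Complex.mul_conj, ← Complex.sq_abs]
  push_cast
  ring

lemma hasFDerivAt_uab_s5 (α β : ℂ) {z : ℂ} (hz : Complex.abs z < 1) :
    HasFDerivAt (uab α β) (Lm (Pf α β z) (Qf α β z)) z := by
  have hre : |z.re| < 1 := lt_of_le_of_lt (Complex.abs_re_le_abs z) hz
  have hslit1 : (1 - z) ∈ Complex.slitPlane := by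
    left
    simp only [Complex.sub_re, Complex.one_re]
    have := abs_lt.mp hre
    linarith [this.2]
  have hslit2 : (1 - (starRingEnd ℂ) z) ∈ Complex.slitPlane := by
    left
    simp only [Complex.sub_re, Complex.one_re, Complex.conj_re]
    have := abs_lt.mp hre
    linarith [this.2]
  have hmzpos : (0:ℝ) < 1 - Complex.abs z ^ 2 := by nlinarith [Complex.abs.nonneg z]
  have hslit3 : mz z ∈ Complex.slitPlane := by
    left
    show (0:ℝ) < (((1 : ℝ) - Complex.abs z ^ 2 : ℝ) : ℂ).re
    rw [Complex.ofReal_re]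
    exact hmzpos
  have hconjF : ∀ w : ℂ, HasFDerivAt (fun w : ℂ => (starRingEnd ℂ) w) conjC w := by
    intro w
    exact conjC.hasFDerivAt
  -- derivative of the inner function 1 - w * conj w
  have hgd : HasFDerivAt (fun w : ℂ => (1:ℂ) - w * (starRingEnd ℂ) w)
      (Lm (-(starRingEnd ℂ) z) (-z)) z := by
    have h1 : HasFDerivAt (fun w : ℂ => w * (starRingEnd ℂ) w)
        (z • conjC + (starRingEnd ℂ) z • idC) z := by
      have := (hasFDerivAt_id z).mul (hconjF z)
      simpa [idC, Pi.mul_def] using this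
    have h2 := h1.const_sub 1
    refine h2.congr_fderiv (Eq.symm ?_)
    ext v
    simp [Lm, idC, conjC, Complex.conjCLE_apply]
    all_goals ring
  -- factor A
  have hA : HasFDerivAt (fun w : ℂ => (((1 : ℝ) - Complex.abs w ^ 2 : ℝ) : ℂ) ^ (α+β+1))
      (Lm (-((α+β+1) * mz z ^ (α+β) * (starRingEnd ℂ) z))
          (-((α+β+1) * mz z ^ (α+β) * z))) z := by
    have houter : HasDerivAt (fun w : ℂ => w ^ (α+β+1)) ((α+β+1) * mz z ^ (α+β+1-1))
        (mz z) :=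
      (Complex.hasStrictDerivAt_cpow_const (c := α+β+1) hslit3).hasDerivAt
    have hcomp := houter.comp_hasFDerivAt_of_eq z hgd (by rw [mz_eq z])
    have heq : (fun w : ℂ => w ^ (α+β+1)) ∘ (fun w : ℂ => (1:ℂ) - w * (starRingEnd ℂ) w)
        = fun w : ℂ => (((1 : ℝ) - Complex.abs w ^ 2 : ℝ) : ℂ) ^ (α+β+1) := by
      funext w
      simp only [Function.comp_apply, ← mz_eq w, mz]
    rw [heq] at hcomp
    refine hcomp.congr_fderiv (Eq.symm ?_)
    have hexp : (α+β+1-1:ℂ) = α + β := by ring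
    refine clm_ext_aux fun v => ?_
    simp only [Lm_apply, ContinuousLinearMap.smul_apply, smul_eq_mul, hexp]
    ring
  -- factor B
  have hB : HasFDerivAt (fun w : ℂ => (1-w) ^ (-(α+1)))
      (Lm ((α+1) * (1-z)^(-(α+2))) 0) z := by
    have houter : HasDerivAt (fun w : ℂ => w ^ (-(α+1))) (-(α+1) * (1-z) ^ (-(α+1)-1))
        ((fun w : ℂ => 1 - w) z) :=
      (Complex.hasStrictDerivAt_cpow_const (c := -(α+1)) hslit1).hasDerivAt
    have hinner : HasFDerivAt (fun w : ℂ => (1:ℂ) - w) (-idC : ℂ →L[ℝ] ℂ) z := by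
      have := (hasFDerivAt_id (𝕜 := ℝ) z).const_sub (1:ℂ)
      simpa [idC] using this
    have hcomp := houter.comp_hasFDerivAt z hinner
    refine hcomp.congr_fderiv (Eq.symm ?_)
    have hexp : (1-z) ^ (-(α+1)-1) = (1-z) ^ (-(α+2)) := by
      congr 1
      ring
    refine clm_ext_aux fun v => ?_
    simp only [Lm_apply, ContinuousLinearMap.smul_apply, ContinuousLinearMap.neg_apply,
      ContinuousLinearMap.coe_id', id_eq, smul_eq_mul, hexp, idC]
    ring
  -- factor C
  have hC : HasFDerivAt (fun w : ℂ => (1-(starRingEnd ℂ) w) ^ (-(β+1)))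
      (Lm 0 ((β+1) * (1-(starRingEnd ℂ) z)^(-(β+2)))) z := by
    have houter : HasDerivAt (fun w : ℂ => (1-w) ^ (-(β+1)))
        (-(β+1) * (1-(starRingEnd ℂ) z) ^ (-(β+1)-1) * (-1))
        ((fun w : ℂ => (starRingEnd ℂ) w) z) := by
      have hid : HasDerivAt (fun w : ℂ => (1:ℂ) - w) (-1) ((starRingEnd ℂ) z) := by
        simpa using ((hasDerivAt_id ((starRingEnd ℂ) z)).const_sub (1:ℂ))
      exact HasDerivAt.cpow_const hid hslit2
    have hcomp := houter.comp_hasFDerivAt z (hconjF z)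
    refine hcomp.congr_fderiv (Eq.symm ?_)
    have hexp : (1-(starRingEnd ℂ) z) ^ (-(β+1)-1) = (1-(starRingEnd ℂ) z) ^ (-(β+2)) := by
      congr 1
      ring
    refine clm_ext_aux fun v => ?_
    simp only [Lm_apply, ContinuousLinearMap.smul_apply, smul_eq_mul, hexp]
    simp [conjC, Complex.conjCLE_apply]
    ring
  have hAB := hA.mul hB
  have hABC := hAB.mul hC
  have : uab α β = fun w => ((((1 : ℝ) - Complex.abs w ^ 2 : ℝ) : ℂ) ^ (α+β+1)
      * (1-w) ^ (-(α+1))) * (1-(starRingEnd ℂ) w) ^ (-(β+1)) := by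
    funext w
    rw [uab]; rfl
  rw [this]
  refine hABC.congr_fderiv (Eq.symm ?_)
  refine clm_ext_aux fun v => ?_
  simp only [Lm_apply, ContinuousLinearMap.add_apply, ContinuousLinearMap.smul_apply,
    smul_eq_mul, Pf, Qf, mz, Pi.mul_apply]
  push_cast
  ring

lemma continuous_mz : Continuous mz := by
  unfold mz
  exact Complex.continuous_ofReal.comp (continuous_const.sub (Complex.continuous_abs.pow 2))

lemma slit1 {z : ℂ} (hz : Complex.abs z ≤ 1/2) : (1 - z) ∈ Complex.slitPlane := by
  left
  simp only [Complex.sub_re, Complex.one_re]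
  have h := (abs_le.mp (le_trans (Complex.abs_re_le_abs z) hz)).2
  linarith

lemma slit2 {z : ℂ} (hz : Complex.abs z ≤ 1/2) :
    (1 - (starRingEnd ℂ) z) ∈ Complex.slitPlane := by
  left
  simp only [Complex.sub_re, Complex.one_re, Complex.conj_re]
  have h := (abs_le.mp (le_trans (Complex.abs_re_le_abs z) hz)).2
  linarith

lemma slit3 {z : ℂ} (hz : Complex.abs z ≤ 1/2) : mz z ∈ Complex.slitPlane := by
  left
  show (0:ℝ) < (((1 : ℝ) - Complex.abs z ^ 2 : ℝ) : ℂ).re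
  rw [Complex.ofReal_re]
  nlinarith [Complex.abs.nonneg z]

lemma mem_cb {z : ℂ} : z ∈ Metric.closedBall (0:ℂ) (1/2) ↔ Complex.abs z ≤ 1/2 := by
  rw [Metric.mem_closedBall, Complex.dist_eq, sub_zero]; rfl

lemma contOn_mzpow (c : ℂ) :
    ContinuousOn (fun z : ℂ => mz z ^ c) (Metric.closedBall 0 (1/2)) := by
  intro z hz
  exact (continuous_mz.continuousAt.cpow continuousAt_const
    (slit3 (mem_cb.mp hz))).continuousWithinAt

lemma contOn_pow1 (c : ℂ) :
    ContinuousOn (fun z : ℂ => (1 - z) ^ c) (Metric.closedBall 0 (1/2)) := by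
  intro z hz
  exact ((continuous_const.sub continuous_id).continuousAt.cpow continuousAt_const
    (slit1 (mem_cb.mp hz))).continuousWithinAt

lemma contOn_pow2 (c : ℂ) :
    ContinuousOn (fun z : ℂ => (1 - (starRingEnd ℂ) z) ^ c) (Metric.closedBall 0 (1/2)) := by
  intro z hz
  exact ((continuous_const.sub Complex.continuous_conj).continuousAt.cpow continuousAt_const
    (slit2 (mem_cb.mp hz))).continuousWithinAt

lemma contOn_Pf (α β : ℂ) : ContinuousOn (Pf α β) (Metric.closedBall 0 (1/2)) := by
  unfold Pf
  exact ((((continuousOn_const.mul (contOn_mzpow (α+β))).mul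
      Complex.continuous_conj.continuousOn).neg.mul (contOn_pow1 (-(α+1)))).mul
      (contOn_pow2 (-(β+1)))).add
    (((continuousOn_const.mul (contOn_pow1 (-(α+2)))).mul (contOn_mzpow (α+β+1))).mul
      (contOn_pow2 (-(β+1))))

lemma contOn_Qf (α β : ℂ) : ContinuousOn (Qf α β) (Metric.closedBall 0 (1/2)) := by
  unfold Qf
  exact ((((continuousOn_const.mul (contOn_mzpow (α+β))).mul
      continuousOn_id).neg.mul (contOn_pow1 (-(α+1)))).mul
      (contOn_pow2 (-(β+1)))).add
    (((continuousOn_const.mul (contOn_pow2 (-(β+2)))).mul (contOn_mzpow (α+β+1))).mul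
      (contOn_pow1 (-(α+1))))

lemma exists_bound_s5 (α β : ℂ) : ∃ K : ℝ, 0 ≤ K ∧
    ∀ z : ℂ, Complex.abs z ≤ 1/2 → ‖Lm (Pf α β z) (Qf α β z)‖ ≤ K := by
  have hf : ContinuousOn (fun z => Complex.abs (Pf α β z) + Complex.abs (Qf α β z))
      (Metric.closedBall 0 (1/2)) :=
    (Complex.continuous_abs.comp_continuousOn (contOn_Pf α β)).add
      (Complex.continuous_abs.comp_continuousOn (contOn_Qf α β))
  obtain ⟨K, hK⟩ := (isCompact_closedBall (0:ℂ) (1/2)).exists_bound_of_continuousOn hf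
  refine ⟨K, ?_, ?_⟩
  · have h0 := hK 0 (by simp)
    have : (0:ℝ) ≤ ‖Complex.abs (Pf α β 0) + Complex.abs (Qf α β 0)‖ := norm_nonneg _
    linarith
  · intro z hz
    calc ‖Lm (Pf α β z) (Qf α β z)‖ ≤ Complex.abs (Pf α β z) + Complex.abs (Qf α β z) :=
        Lm_norm_le _ _
      _ ≤ ‖Complex.abs (Pf α β z) + Complex.abs (Qf α β z)‖ := le_abs_self _
      _ ≤ K := hK z (mem_cb.mpr hz)






def rotC (t : ℝ) : ℂ →L[ℝ] ℂ := Complex.exp (-(Complex.I * t)) • idC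

lemma rotC_apply (t : ℝ) (v : ℂ) : rotC t v = Complex.exp (-(Complex.I * t)) * v := by
  simp [rotC, idC]

lemma abs_exp_mI (t : ℝ) : Complex.abs (Complex.exp (-(Complex.I * t))) = 1 := by
  rw [Complex.abs_exp]; simp

lemma abs_exp_pI (t : ℝ) : Complex.abs (Complex.exp (Complex.I * t)) = 1 := by
  rw [Complex.abs_exp]; simp

lemma rotC_apply_norm (t : ℝ) (v : ℂ) : ‖rotC t v‖ = ‖v‖ := by
  rw [rotC_apply, norm_mul, Complex.norm_eq_abs, abs_exp_mI, one_mul]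

lemma rotC_norm (t : ℝ) : ‖rotC t‖ ≤ 1 := by
  apply ContinuousLinearMap.opNorm_le_bound _ zero_le_one
  intro v
  rw [rotC_apply_norm, one_mul]

lemma continuous_rotC : Continuous rotC := by
  show Continuous ((fun t : ℝ => Complex.exp (-(Complex.I * t))) • fun _ : ℝ => idC)
  apply Continuous.smul _ continuous_const
  have : Continuous fun t : ℝ => -(Complex.I * t) :=
    (continuous_const.mul Complex.continuous_ofReal).neg
  exact Complex.continuous_exp.comp this

def Fd (α β : ℂ) (φ : ℂ → ℂ) (x : ℂ) (t : ℝ) : ℂ →L[ℝ] ℂ :=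
  φ (Complex.exp (Complex.I * t)) •
    ((Lm (Pf α β (x * Complex.exp (-(Complex.I * t))))
        (Qf α β (x * Complex.exp (-(Complex.I * t))))).comp (rotC t))

lemma uab_zero (α β : ℂ) : uab α β 0 = 1 := by
  simp [uab]

lemma Pf_zero (α β : ℂ) : Pf α β 0 = α + 1 := by
  simp [Pf, mz]

lemma Qf_zero (α β : ℂ) : Qf α β 0 = β + 1 := by
  simp [Qf, mz]

lemma Fd_norm_le (α β : ℂ) (φ : ℂ → ℂ) {K : ℝ} (hK0 : 0 ≤ K)
    (hK : ∀ z : ℂ, Complex.abs z ≤ 1/2 → ‖Lm (Pf α β z) (Qf α β z)‖ ≤ K)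
    (x : ℂ) (t : ℝ) (hx : Complex.abs (x * Complex.exp (-(Complex.I * t))) ≤ 1/2) :
    ‖Fd α β φ x t‖ ≤ Complex.abs (φ (Complex.exp (Complex.I * t))) * K := by
  apply ContinuousLinearMap.opNorm_le_bound _ (mul_nonneg (Complex.abs.nonneg _) hK0)
  intro v
  have happ : Fd α β φ x t v = φ (Complex.exp (Complex.I * t)) •
      ((Lm (Pf α β (x * Complex.exp (-(Complex.I * t))))
        (Qf α β (x * Complex.exp (-(Complex.I * t))))) (rotC t v)) := rfl
  rw [happ, norm_smul, Complex.norm_eq_abs]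
  have h2 : ‖(Lm (Pf α β (x * Complex.exp (-(Complex.I * t))))
      (Qf α β (x * Complex.exp (-(Complex.I * t))))) (rotC t v)‖ ≤ K * ‖v‖ := by
    refine le_trans (ContinuousLinearMap.le_opNorm _ _) ?_
    rw [rotC_apply_norm]
    exact mul_le_mul_of_nonneg_right (hK _ hx) (norm_nonneg v)
  calc Complex.abs (φ (Complex.exp (Complex.I * t))) * ‖(Lm _ _) (rotC t v)‖
      ≤ Complex.abs (φ (Complex.exp (Complex.I * t))) * (K * ‖v‖) :=
        mul_le_mul_of_nonneg_left h2 (Complex.abs.nonneg _)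
    _ = Complex.abs (φ (Complex.exp (Complex.I * t))) * K * ‖v‖ := by ring

lemma main_deriv (α β : ℂ) (φ : ℂ → ℂ)
    (hφ : IntervalIntegrable (fun t : ℝ => φ (Complex.exp (Complex.I * t)))
      volume 0 (2 * Real.pi)) :
    HasFDerivAt (fun x : ℂ => ∫ t in (0 : ℝ)..(2 * Real.pi),
        uab α β (x * Complex.exp (-(Complex.I * t))) * φ (Complex.exp (Complex.I * t)))
      (∫ t in (0 : ℝ)..(2 * Real.pi), Fd α β φ 0 t) 0 := by
  obtain ⟨K, hK0, hK⟩ := exists_bound_s5 α β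
  have hψm : AEStronglyMeasurable (fun t : ℝ => φ (Complex.exp (Complex.I * t)))
      (volume.restrict (Set.uIoc 0 (2 * Real.pi))) := hφ.def'.aestronglyMeasurable
  have habs : ∀ (x : ℂ) (t : ℝ), Complex.abs (x * Complex.exp (-(Complex.I * t)))
      = Complex.abs x := by
    intro x t
    rw [map_mul, abs_exp_mI, mul_one]
  have hcont_inner : ∀ x : ℂ, Continuous fun t : ℝ => x * Complex.exp (-(Complex.I * t)) :=
    fun x => continuous_const.mul (Complex.continuous_exp.comp
      ((continuous_const.mul Complex.continuous_ofReal).neg))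
  apply intervalIntegral.hasFDerivAt_integral_of_dominated_of_fderiv_le
    (F' := Fd α β φ) (bound := fun t => Complex.abs (φ (Complex.exp (Complex.I * t))) * K)
    (s := Metric.ball 0 (1/2)) (Metric.ball_mem_nhds _ (by norm_num))
  · -- measurability of F x for x near 0
    filter_upwards [Metric.ball_mem_nhds (0:ℂ) (by norm_num : (0:ℝ) < 1/2)] with x hx
    have hxlt : Complex.abs x < 1/2 := by
      simpa [Complex.dist_eq] using hx
    have hc : Continuous fun t : ℝ => uab α β (x * Complex.exp (-(Complex.I * t))) := by
      rw [continuous_iff_continuousAt]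
      intro t
      have hin : Complex.abs (x * Complex.exp (-(Complex.I * t))) < 1 := by
        rw [habs]; linarith
      exact ContinuousAt.comp (x := t)
        (f := fun t : ℝ => x * Complex.exp (-(Complex.I * t))) (g := uab α β)
        ((hasFDerivAt_uab_s5 α β hin).differentiableAt.continuousAt)
        ((hcont_inner x).continuousAt)
    exact hc.aestronglyMeasurable.mul hψm
  · -- integrability at x₀ = 0
    have heq : (fun t : ℝ => uab α β ((0:ℂ) * Complex.exp (-(Complex.I * t)))
        * φ (Complex.exp (Complex.I * t)))
        = fun t : ℝ => φ (Complex.exp (Complex.I * t)) := by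
      funext t
      rw [zero_mul, uab_zero, one_mul]
    rw [heq]
    exact hφ
  · -- measurability of F' 0
    show AEStronglyMeasurable (fun t : ℝ => φ (Complex.exp (Complex.I * t)) •
      ((Lm (Pf α β ((0:ℂ) * Complex.exp (-(Complex.I * t))))
        (Qf α β ((0:ℂ) * Complex.exp (-(Complex.I * t))))).comp (rotC t))) _
    apply AEStronglyMeasurable.smul hψm
    apply Continuous.aestronglyMeasurable
    have h1 : Continuous fun t : ℝ =>
        (Lm (Pf α β ((0:ℂ) * Complex.exp (-(Complex.I * t))))
          (Qf α β ((0:ℂ) * Complex.exp (-(Complex.I * t))))) := by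
      simp only [zero_mul]
      exact continuous_const
    exact (ContinuousLinearMap.compL ℝ ℂ ℂ ℂ).continuous₂.comp (h1.prodMk continuous_rotC)
  · -- bound
    filter_upwards with t _ x hx
    have hxle : Complex.abs (x * Complex.exp (-(Complex.I * t))) ≤ 1/2 := by
      rw [habs]
      have : Complex.abs x < 1/2 := by simpa [Complex.dist_eq] using hx
      linarith
    exact Fd_norm_le α β φ hK0 hK x t hxle
  · -- integrability of bound
    exact hφ.norm.mul_const K
  · -- differentiability
    filter_upwards with t _ x hx
    have hin : Complex.abs (x * Complex.exp (-(Complex.I * t))) < 1 := by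
      rw [habs]
      have : Complex.abs x < 1/2 := by simpa [Complex.dist_eq] using hx
      linarith
    have hmul : HasFDerivAt (fun y : ℂ => y * Complex.exp (-(Complex.I * t))) (rotC t) x := by
      have := (hasFDerivAt_id (𝕜 := ℝ) x).mul_const (Complex.exp (-(Complex.I * t)))
      simpa [rotC, idC] using this
    have hu := (hasFDerivAt_uab_s5 α β hin).comp x hmul
    exact hu.mul_const (φ (Complex.exp (Complex.I * t)))

lemma Fd_integrable (α β : ℂ) (φ : ℂ → ℂ)
    (hφ : IntervalIntegrable (fun t : ℝ => φ (Complex.exp (Complex.I * t)))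
      volume 0 (2 * Real.pi)) :
    IntervalIntegrable (Fd α β φ 0) volume 0 (2 * Real.pi) := by
  obtain ⟨K, hK0, hK⟩ := exists_bound_s5 α β
  rw [intervalIntegrable_iff]
  have hg : MeasureTheory.Integrable (fun t : ℝ =>
      Complex.abs (φ (Complex.exp (Complex.I * t))) * K)
      (volume.restrict (Set.uIoc 0 (2*Real.pi))) := (hφ.norm.mul_const K).def'
  have hm : AEStronglyMeasurable (Fd α β φ 0)
      (volume.restrict (Set.uIoc (0:ℝ) (2*Real.pi))) := by
    show AEStronglyMeasurable (fun t : ℝ => φ (Complex.exp (Complex.I * t)) •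
      ((Lm (Pf α β ((0:ℂ) * Complex.exp (-(Complex.I * t))))
        (Qf α β ((0:ℂ) * Complex.exp (-(Complex.I * t))))).comp (rotC t))) _
    apply AEStronglyMeasurable.smul hφ.def'.aestronglyMeasurable
    apply Continuous.aestronglyMeasurable
    have h1 : Continuous fun t : ℝ =>
        (Lm (Pf α β ((0:ℂ) * Complex.exp (-(Complex.I * t))))
          (Qf α β ((0:ℂ) * Complex.exp (-(Complex.I * t))))) := by
      simp only [zero_mul]
      exact continuous_const
    exact (ContinuousLinearMap.compL ℝ ℂ ℂ ℂ).continuous₂.comp (h1.prodMk continuous_rotC)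
  have hb : ∀ᵐ t ∂(volume.restrict (Set.uIoc 0 (2*Real.pi))),
      ‖Fd α β φ 0 t‖ ≤ Complex.abs (φ (Complex.exp (Complex.I * t))) * K := by
    filter_upwards with t
    refine Fd_norm_le α β φ hK0 hK 0 t ?_
    rw [zero_mul]
    simp
  exact hg.mono' hm hb

lemma conj_exp_mI (t : ℝ) :
    (starRingEnd ℂ) (Complex.exp (-(Complex.I * t))) = Complex.exp (Complex.I * t) := by
  rw [← Complex.exp_conj]
  congr 1
  simp [Complex.conj_I]

lemma Fd_apply (α β : ℂ) (φ : ℂ → ℂ) (t : ℝ) (v : ℂ) :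
    Fd α β φ 0 t v = φ (Complex.exp (Complex.I * t)) *
      ((α+1) * (Complex.exp (-(Complex.I * t)) * v)
        + (β+1) * (starRingEnd ℂ) (Complex.exp (-(Complex.I * t)) * v)) := by
  show φ _ • ((Lm (Pf α β ((0:ℂ) * Complex.exp (-(Complex.I * t))))
      (Qf α β ((0:ℂ) * Complex.exp (-(Complex.I * t))))) (rotC t v)) = _
  rw [rotC_apply, zero_mul, Pf_zero, Qf_zero, Lm_apply, smul_eq_mul]

lemma wirtinger_Pab (α β : ℂ) (φ : ℂ → ℂ)
    (hφ : IntervalIntegrable (fun t : ℝ => φ (Complex.exp (Complex.I * t)))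
      volume 0 (2 * Real.pi)) :
    wdz (Pab α β φ) 0 = cab α β * ((1 / (2 * Real.pi) : ℝ) : ℂ) *
        ((α+1) * ∫ t in (0:ℝ)..(2*Real.pi),
          Complex.exp (-(Complex.I*t)) * φ (Complex.exp (Complex.I*t))) ∧
      wdzbar (Pab α β φ) 0 = cab α β * ((1 / (2 * Real.pi) : ℝ) : ℂ) *
        ((β+1) * ∫ t in (0:ℝ)..(2*Real.pi),
          Complex.exp (Complex.I*t) * φ (Complex.exp (Complex.I*t))) := by
  have hcont1 : Continuous fun t : ℝ => Complex.exp (-(Complex.I * t)) :=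
    Complex.continuous_exp.comp ((continuous_const.mul Complex.continuous_ofReal).neg)
  have hcont2 : Continuous fun t : ℝ => Complex.exp (Complex.I * t) :=
    Complex.continuous_exp.comp (continuous_const.mul Complex.continuous_ofReal)
  have hI1 : IntervalIntegrable (fun t : ℝ =>
      Complex.exp (-(Complex.I*t)) * φ (Complex.exp (Complex.I*t))) volume 0 (2*Real.pi) :=
    hφ.continuousOn_mul hcont1.continuousOn
  have hI2 : IntervalIntegrable (fun t : ℝ =>
      Complex.exp (Complex.I*t) * φ (Complex.exp (Complex.I*t))) volume 0 (2*Real.pi) :=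
    hφ.continuousOn_mul hcont2.continuousOn
  set E1 := ∫ t in (0:ℝ)..(2*Real.pi),
    Complex.exp (-(Complex.I*t)) * φ (Complex.exp (Complex.I*t)) with hE1
  set E2 := ∫ t in (0:ℝ)..(2*Real.pi),
    Complex.exp (Complex.I*t) * φ (Complex.exp (Complex.I*t)) with hE2
  have hmain := main_deriv α β φ hφ
  have hPab : HasFDerivAt (Pab α β φ)
      ((cab α β * ((1 / (2 * Real.pi) : ℝ) : ℂ)) •
        (∫ t in (0:ℝ)..(2*Real.pi), Fd α β φ 0 t)) 0 :=
    hmain.const_mul (cab α β * ((1 / (2 * Real.pi) : ℝ) : ℂ))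
  have hfd := hPab.fderiv
  have happly : ∀ v : ℂ, fderiv ℝ (Pab α β φ) 0 v
      = cab α β * ((1 / (2 * Real.pi) : ℝ) : ℂ) *
        ∫ t in (0:ℝ)..(2*Real.pi), Fd α β φ 0 t v := by
    intro v
    rw [hfd, ContinuousLinearMap.smul_apply,
      ContinuousLinearMap.intervalIntegral_apply (Fd_integrable α β φ hφ) v, smul_eq_mul]
  have hL1 : (∫ t in (0:ℝ)..(2*Real.pi), Fd α β φ 0 t 1) = (α+1) * E1 + (β+1) * E2 := by
    have hcong : Set.EqOn (fun t : ℝ => Fd α β φ 0 t 1)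
        (fun t : ℝ => (α+1) * (Complex.exp (-(Complex.I*t)) * φ (Complex.exp (Complex.I*t)))
          + (β+1) * (Complex.exp (Complex.I*t) * φ (Complex.exp (Complex.I*t))))
        (Set.uIcc 0 (2*Real.pi)) := by
      intro t _
      simp only [Fd_apply, mul_one, map_mul, conj_exp_mI, map_one]
      ring
    rw [intervalIntegral.integral_congr hcong,
      intervalIntegral.integral_add (hI1.const_mul _) (hI2.const_mul _),
      intervalIntegral.integral_const_mul, intervalIntegral.integral_const_mul]
  have hLI : (∫ t in (0:ℝ)..(2*Real.pi), Fd α β φ 0 t Complex.I)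
      = ((α+1) * Complex.I) * E1 + (-((β+1) * Complex.I)) * E2 := by
    have hcong : Set.EqOn (fun t : ℝ => Fd α β φ 0 t Complex.I)
        (fun t : ℝ => ((α+1) * Complex.I)
            * (Complex.exp (-(Complex.I*t)) * φ (Complex.exp (Complex.I*t)))
          + (-((β+1) * Complex.I))
            * (Complex.exp (Complex.I*t) * φ (Complex.exp (Complex.I*t))))
        (Set.uIcc 0 (2*Real.pi)) := by
      intro t _
      simp only [Fd_apply, map_mul, conj_exp_mI, Complex.conj_I]
      ring
    rw [intervalIntegral.integral_congr hcong,
      intervalIntegral.integral_add (hI1.const_mul _) (hI2.const_mul _),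
      intervalIntegral.integral_const_mul, intervalIntegral.integral_const_mul]
  constructor
  · show (fderiv ℝ (Pab α β φ) 0 1 - Complex.I * fderiv ℝ (Pab α β φ) 0 Complex.I) / 2 = _
    rw [happly 1, happly Complex.I, hL1, hLI]
    linear_combination (cab α β * ((1 / (2 * Real.pi) : ℝ) : ℂ)
      * ((β+1) * E2 - (α+1) * E1) / 2) * Complex.I_mul_I
  · show (fderiv ℝ (Pab α β φ) 0 1 + Complex.I * fderiv ℝ (Pab α β φ) 0 Complex.I) / 2 = _
    rw [happly 1, happly Complex.I, hL1, hLI]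
    linear_combination (cab α β * ((1 / (2 * Real.pi) : ℝ) : ℂ)
      * ((α+1) * E1 - (β+1) * E2) / 2) * Complex.I_mul_I

section EllSec
open Real intervalIntegral

lemma ptwise {l1 l2 : ℝ} (h1 : 0 ≤ l1) (h2 : 0 ≤ l2) (hsum : 0 < l1 + l2) (s : ℝ) :
    Real.sqrt (l1^2 + l2^2 + 2*l1*l2*Real.cos s)
      = (l1+l2) * Real.sqrt (1 - (2*Real.sqrt (l1*l2)/(l1+l2))^2 * Real.sin (s/2) ^ 2) := by
  have hk2 : (2*Real.sqrt (l1*l2)/(l1+l2))^2 = 4*(l1*l2)/(l1+l2)^2 := by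
    rw [div_pow, mul_pow, Real.sq_sqrt (mul_nonneg h1 h2)]; ring
  have hcos : Real.cos s = 1 - 2 * Real.sin (s/2)^2 := by
    have hs : s = 2*(s/2) := by ring
    nlinarith [Real.cos_two_mul (s/2), Real.sin_sq_add_cos_sq (s/2), Real.cos_two_mul (s/2) ▸ (hs ▸ rfl : Real.cos s = Real.cos (2*(s/2)))]
  have key : l1^2 + l2^2 + 2*l1*l2*Real.cos s
      = (l1+l2)^2 * (1 - (2*Real.sqrt (l1*l2)/(l1+l2))^2 * Real.sin (s/2) ^ 2) := by
    rw [hk2, hcos]; field_simp; ring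
  rw [key, Real.sqrt_mul (sq_nonneg _), Real.sqrt_sq hsum.le]

lemma ellint {l1 l2 : ℝ} (h1 : 0 ≤ l1) (h2 : 0 ≤ l2) (hsum : 0 < l1 + l2) (θ : ℝ) :
    (∫ t in (0:ℝ)..(2*π), Real.sqrt (l1^2 + l2^2 + 2*l1*l2*Real.cos (2*t + θ)))
      = 4 * (l1+l2) * ∫ t in (0:ℝ)..(π/2),
          Real.sqrt (1 - (2*Real.sqrt (l1*l2)/(l1+l2))^2 * Real.sin t ^ 2) := by
  set g : ℝ → ℝ := fun s => Real.sqrt (l1^2 + l2^2 + 2*l1*l2*Real.cos s) with hg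
  have hgc : Continuous g := by continuity
  have hper : Function.Periodic g (2*π) := fun x => by simp [hg, Real.cos_add_two_pi]
  set h : ℝ → ℝ := fun u => Real.sqrt (1 - (2*Real.sqrt (l1*l2)/(l1+l2))^2 * Real.sin u ^ 2)
    with hh
  have hhc : Continuous h := by continuity
  have step1 : (∫ t in (0:ℝ)..(2*π), g (2*t + θ)) = (2:ℝ)⁻¹ • ∫ s in (2*0+θ)..(2*(2*π)+θ), g s :=
    integral_comp_mul_add g two_ne_zero θ
  have step2 : (∫ s in (2*0+θ)..(2*(2*π)+θ), g s) = 2 * ∫ s in (0:ℝ)..(2*π), g s := by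
    have hadj : (∫ s in (2*0+θ)..(θ+2*π), g s) + (∫ s in (θ+2*π)..(2*(2*π)+θ), g s)
        = ∫ s in (2*0+θ)..(2*(2*π)+θ), g s := by
      apply integral_add_adjacent_intervals <;> exact hgc.intervalIntegrable _ _
    have e1 : (∫ s in (2*0+θ)..(θ+2*π), g s) = ∫ s in (0:ℝ)..(2*π), g s := by
      have := hper.intervalIntegral_add_eq θ 0
      simpa using this
    have e2 : (∫ s in (θ+2*π)..(2*(2*π)+θ), g s) = ∫ s in (0:ℝ)..(2*π), g s := by
      have := hper.intervalIntegral_add_eq (θ+2*π) 0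
      have harr : 2*(2*π)+θ = θ+2*π+(2*π) := by ring
      rw [harr]
      simpa using this
    rw [← hadj, e1, e2]; ring
  have step3 : (∫ s in (0:ℝ)..(2*π), g s) = (l1+l2) * ∫ s in (0:ℝ)..(2*π), h (s/2) := by
    rw [← intervalIntegral.integral_const_mul]
    apply integral_congr
    intro s _
    exact ptwise h1 h2 hsum s
  have step4 : (∫ s in (0:ℝ)..(2*π), h (s/2)) = 2 • ∫ u in (0:ℝ)..(π), h u := by
    have := integral_comp_div (a := 0) (b := 2*π) h (two_ne_zero (α := ℝ))
    rw [this]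
    norm_num
  have step5 : (∫ u in (0:ℝ)..π, h u) = 2 * ∫ u in (0:ℝ)..(π/2), h u := by
    have hadj : (∫ u in (0:ℝ)..(π/2), h u) + (∫ u in (π/2)..π, h u) = ∫ u in (0:ℝ)..π, h u :=
      integral_add_adjacent_intervals (hhc.intervalIntegrable _ _) (hhc.intervalIntegrable _ _)
    have hrefl : (∫ u in (π/2)..π, h u) = ∫ u in (0:ℝ)..(π/2), h u := by
      have := integral_comp_sub_left (a := (0:ℝ)) (b := π/2) h π
      have : (∫ u in (0:ℝ)..(π/2), h (π - u)) = ∫ u in (π/2)..π, h u := by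
        rw [integral_comp_sub_left h π, sub_half, sub_zero]
      rw [← this]
      apply integral_congr
      intro u _
      simp [hh, Real.sin_pi_sub]
    rw [← hadj, hrefl]; ring
  calc (∫ t in (0:ℝ)..(2*π), g (2*t + θ)) = (2:ℝ)⁻¹ • ∫ s in (2*0+θ)..(2*(2*π)+θ), g s := step1
    _ = (2:ℝ)⁻¹ * (2 * ∫ s in (0:ℝ)..(2*π), g s) := by rw [step2]; norm_num
    _ = ∫ s in (0:ℝ)..(2*π), g s := by ring
    _ = (l1+l2) * (2 • ∫ u in (0:ℝ)..π, h u) := by rw [step3, step4]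
    _ = (l1+l2) * (2 * (2 * ∫ u in (0:ℝ)..(π/2), h u)) := by rw [step5]; norm_num
    _ = 4 * (l1+l2) * ∫ u in (0:ℝ)..(π/2), h u := by ring

lemma abs_point (z₁ z₂ : ℂ) (t : ℝ) :
    Complex.abs (z₁ * Complex.exp (-(Complex.I*t)) + z₂ * Complex.exp (Complex.I*t))
      = Real.sqrt ((Complex.abs z₁)^2 + (Complex.abs z₂)^2
          + 2*(Complex.abs z₁)*(Complex.abs z₂)
            * Real.cos (2*t + Complex.arg ((starRingEnd ℂ) z₁ * z₂))) := by
  have habs_e1 : Complex.abs (Complex.exp (-(Complex.I*t))) = 1 := by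
    rw [Complex.abs_exp]; simp
  have habs_e2 : Complex.abs (Complex.exp (Complex.I*t)) = 1 := by
    rw [Complex.abs_exp]; simp
  have hconj : (starRingEnd ℂ) (z₂ * Complex.exp (Complex.I*t))
      = (starRingEnd ℂ) z₂ * Complex.exp (-(Complex.I*t)) := by
    rw [map_mul, ← Complex.exp_conj]
    congr 2
    simp [Complex.conj_I]
  have key : (z₁ * Complex.exp (-(Complex.I*t))) * (starRingEnd ℂ) (z₂ * Complex.exp (Complex.I*t))
      = (starRingEnd ℂ) ((starRingEnd ℂ) z₁ * z₂ * Complex.exp (Complex.I * ((2*t:ℝ):ℂ))) := by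
    rw [hconj, map_mul, map_mul, ← Complex.exp_conj, Complex.conj_conj]
    have h2 : (starRingEnd ℂ) (Complex.I * ((2*t:ℝ):ℂ)) = -(Complex.I*t) + -(Complex.I*t) := by
      rw [map_mul, Complex.conj_I, Complex.conj_ofReal]
      push_cast; ring
    rw [h2, Complex.exp_add]
    ring
  have harg : (starRingEnd ℂ) z₁ * z₂ * Complex.exp (Complex.I * ((2*t:ℝ):ℂ))
      = ((Complex.abs z₁ * Complex.abs z₂ : ℝ) : ℂ)
        * Complex.exp ((((starRingEnd ℂ) z₁ * z₂).arg + 2*t : ℝ) * Complex.I) := by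
    conv_lhs => rw [← Complex.abs_mul_exp_arg_mul_I ((starRingEnd ℂ) z₁ * z₂)]
    rw [map_mul, Complex.abs_conj, mul_assoc, ← Complex.exp_add]
    norm_cast
    congr 2
    push_cast
    ring
  have hre : ((z₁ * Complex.exp (-(Complex.I*t)))
      * (starRingEnd ℂ) (z₂ * Complex.exp (Complex.I*t))).re
      = Complex.abs z₁ * Complex.abs z₂
        * Real.cos (2*t + ((starRingEnd ℂ) z₁ * z₂).arg) := by
    rw [key, Complex.conj_re, harg, Complex.re_ofReal_mul, Complex.exp_ofReal_mul_I_re,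
      add_comm (((starRingEnd ℂ) z₁ * z₂).arg)]
  rw [Complex.abs_apply, Complex.normSq_add]
  congr 1
  rw [Complex.normSq_eq_abs, Complex.normSq_eq_abs, map_mul, map_mul, habs_e1, habs_e2, hre]
  ring

lemma lemU (z₁ z₂ : ℂ) (hsum : 0 < Complex.abs z₁ + Complex.abs z₂) :
    (∫ t in (0:ℝ)..(2*π),
        Complex.abs (z₁ * Complex.exp (-(Complex.I*t)) + z₂ * Complex.exp (Complex.I*t)))
      = 4 * (Complex.abs z₁ + Complex.abs z₂) * ∫ t in (0:ℝ)..(π/2),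
          Real.sqrt (1 - (2*Real.sqrt (Complex.abs z₁ * Complex.abs z₂)
            /(Complex.abs z₁ + Complex.abs z₂))^2 * Real.sin t ^ 2) := by
  rw [← ellint (Complex.abs.nonneg z₁) (Complex.abs.nonneg z₂) hsum
    (Complex.arg ((starRingEnd ℂ) z₁ * z₂))]
  apply integral_congr
  intro t _
  exact abs_point z₁ z₂ t

end EllSec

lemma exists_unit (A : ℂ) : ∃ u : ℂ, Complex.abs u = 1 ∧ u * A = ((Complex.abs A : ℝ) : ℂ) := by
  rcases eq_or_ne A 0 with h|h
  · exact ⟨1, by simp, by simp [h]⟩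
  · refine ⟨((Complex.abs A : ℝ) : ℂ) / A, ?_, ?_⟩
    · rw [map_div₀, Complex.abs_ofReal, _root_.abs_of_nonneg (Complex.abs.nonneg A),
        div_self (Complex.abs.ne_zero h)]
    · field_simp

lemma part1 (α β : ℂ) (h1 : α + 1 ≠ 0) (h2 : β + 1 ≠ 0) (φ : ℂ → ℂ) (M : ℝ) (hM : 0 ≤ M)
    (hφ : IntervalIntegrable (fun t : ℝ => φ (Complex.exp (Complex.I * t)))
      volume 0 (2 * Real.pi))
    (hbd : ∀ᵐ (t : ℝ) ∂volume, Complex.abs (φ (Complex.exp (Complex.I * t))) ≤ M) :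
    normD (Pab α β φ) 0 ≤
      2 * Complex.abs (cab α β) * (Complex.abs (α + 1) + Complex.abs (β + 1)) / Real.pi *
        (∫ t in (0 : ℝ)..(Real.pi / 2),
          Real.sqrt (1 -
            (2 * Real.sqrt (Complex.abs (α + 1) * Complex.abs (β + 1)) /
              (Complex.abs (α + 1) + Complex.abs (β + 1))) ^ 2 * Real.sin t ^ 2)) * M := by
  have hπ : (0:ℝ) < Real.pi := Real.pi_pos
  have h2π : (0:ℝ) ≤ 2 * Real.pi := by positivity
  have hcont1 : Continuous fun t : ℝ => Complex.exp (-(Complex.I * t)) :=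
    Complex.continuous_exp.comp ((continuous_const.mul Complex.continuous_ofReal).neg)
  have hcont2 : Continuous fun t : ℝ => Complex.exp (Complex.I * t) :=
    Complex.continuous_exp.comp (continuous_const.mul Complex.continuous_ofReal)
  have hI1 : IntervalIntegrable (fun t : ℝ =>
      Complex.exp (-(Complex.I*t)) * φ (Complex.exp (Complex.I*t))) volume 0 (2*Real.pi) :=
    hφ.continuousOn_mul hcont1.continuousOn
  have hI2 : IntervalIntegrable (fun t : ℝ =>
      Complex.exp (Complex.I*t) * φ (Complex.exp (Complex.I*t))) volume 0 (2*Real.pi) :=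
    hφ.continuousOn_mul hcont2.continuousOn
  obtain ⟨hw, hwb⟩ := wirtinger_Pab α β φ hφ
  set C0 : ℂ := cab α β * ((1 / (2 * Real.pi) : ℝ) : ℂ) with hC0
  set E1 : ℂ := ∫ t in (0:ℝ)..(2*Real.pi),
    Complex.exp (-(Complex.I*t)) * φ (Complex.exp (Complex.I*t)) with hE1def
  set E2 : ℂ := ∫ t in (0:ℝ)..(2*Real.pi),
    Complex.exp (Complex.I*t) * φ (Complex.exp (Complex.I*t)) with hE2def
  obtain ⟨u, hu1, huA⟩ := exists_unit (C0 * ((α+1) * E1))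
  obtain ⟨v, hv1, hvB⟩ := exists_unit (C0 * ((β+1) * E2))
  set W : ℝ → ℂ := fun t => (u * (α+1)) * Complex.exp (-(Complex.I*t))
    + (v * (β+1)) * Complex.exp (Complex.I*t) with hW
  have hWcont : Continuous W := by
    rw [hW]
    exact (continuous_const.mul hcont1).add (continuous_const.mul hcont2)
  have hWψ : IntervalIntegrable (fun t : ℝ => W t * φ (Complex.exp (Complex.I*t)))
      volume 0 (2*Real.pi) := hφ.continuousOn_mul hWcont.continuousOn
  -- the combination identity
  have hWint : u * (C0 * ((α+1) * E1)) + v * (C0 * ((β+1) * E2))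
      = C0 * ∫ t in (0:ℝ)..(2*Real.pi), W t * φ (Complex.exp (Complex.I*t)) := by
    have hcong : Set.EqOn (fun t : ℝ => W t * φ (Complex.exp (Complex.I*t)))
        (fun t : ℝ => (u*(α+1)) * (Complex.exp (-(Complex.I*t)) * φ (Complex.exp (Complex.I*t)))
          + (v*(β+1)) * (Complex.exp (Complex.I*t) * φ (Complex.exp (Complex.I*t))))
        (Set.uIcc 0 (2*Real.pi)) := by
      intro t _
      simp only [hW]
      ring
    rw [intervalIntegral.integral_congr hcong,
      intervalIntegral.integral_add (hI1.const_mul _) (hI2.const_mul _),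
      intervalIntegral.integral_const_mul, intervalIntegral.integral_const_mul]
    ring
  have habsu : Complex.abs (u * (α+1)) = Complex.abs (α+1) := by
    rw [map_mul, hu1, one_mul]
  have habsv : Complex.abs (v * (β+1)) = Complex.abs (β+1) := by
    rw [map_mul, hv1, one_mul]
  have hsumpos : 0 < Complex.abs (u*(α+1)) + Complex.abs (v*(β+1)) := by
    rw [habsu, habsv]
    have := Complex.abs.pos h1
    have := Complex.abs.pos h2
    linarith
  have hUint := lemU (u*(α+1)) (v*(β+1)) hsumpos
  rw [habsu, habsv] at hUint
  -- main estimate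
  have hstep1 : normD (Pab α β φ) 0
      ≤ Complex.abs (u * (C0 * ((α+1) * E1)) + v * (C0 * ((β+1) * E2))) := by
    rw [normD, hw, hwb]
    have : Complex.abs (C0 * ((α+1) * E1)) + Complex.abs (C0 * ((β+1) * E2))
        = (u * (C0 * ((α+1) * E1)) + v * (C0 * ((β+1) * E2))).re := by
      rw [huA, hvB, ← Complex.ofReal_add, Complex.ofReal_re]
    change Complex.abs _ + Complex.abs _ ≤ _
    rw [this]
    exact Complex.re_le_abs _
  have hstep2 : Complex.abs (u * (C0 * ((α+1) * E1)) + v * (C0 * ((β+1) * E2)))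
      ≤ Complex.abs C0 * ∫ t in (0:ℝ)..(2*Real.pi),
          ‖W t * φ (Complex.exp (Complex.I*t))‖ := by
    rw [hWint, map_mul]
    refine mul_le_mul_of_nonneg_left ?_ (Complex.abs.nonneg C0)
    rw [← Complex.norm_eq_abs]
    exact intervalIntegral.norm_integral_le_integral_norm h2π
  have hstep3 : (∫ t in (0:ℝ)..(2*Real.pi), ‖W t * φ (Complex.exp (Complex.I*t))‖)
      ≤ ∫ t in (0:ℝ)..(2*Real.pi), Complex.abs (W t) * M := by
    refine intervalIntegral.integral_mono_ae h2π hWψ.norm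
      (((Complex.continuous_abs.comp hWcont).mul continuous_const).intervalIntegrable _ _) ?_
    filter_upwards [hbd] with t ht
    rw [norm_mul, Complex.norm_eq_abs, Complex.norm_eq_abs]
    exact mul_le_mul_of_nonneg_left ht (Complex.abs.nonneg _)
  have hstep4 : (∫ t in (0:ℝ)..(2*Real.pi), Complex.abs (W t) * M)
      = (4 * (Complex.abs (α+1) + Complex.abs (β+1)) * ∫ t in (0:ℝ)..(Real.pi/2),
          Real.sqrt (1 - (2*Real.sqrt (Complex.abs (α+1) * Complex.abs (β+1))
            /(Complex.abs (α+1) + Complex.abs (β+1)))^2 * Real.sin t ^ 2)) * M := by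
    rw [intervalIntegral.integral_mul_const, ← hUint]
  have habsC0 : Complex.abs C0 = Complex.abs (cab α β) * (1 / (2*Real.pi)) := by
    rw [hC0, map_mul, Complex.abs_ofReal, _root_.abs_of_nonneg (by positivity : (0:ℝ) ≤ 1/(2*Real.pi))]
  calc normD (Pab α β φ) 0
      ≤ Complex.abs (u * (C0 * ((α+1) * E1)) + v * (C0 * ((β+1) * E2))) := hstep1
    _ ≤ Complex.abs C0 * ∫ t in (0:ℝ)..(2*Real.pi),
          ‖W t * φ (Complex.exp (Complex.I*t))‖ := hstep2
    _ ≤ Complex.abs C0 * ∫ t in (0:ℝ)..(2*Real.pi), Complex.abs (W t) * M := by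
        exact mul_le_mul_of_nonneg_left hstep3 (Complex.abs.nonneg C0)
    _ = Complex.abs (cab α β) * (1 / (2*Real.pi)) *
          ((4 * (Complex.abs (α+1) + Complex.abs (β+1)) * ∫ t in (0:ℝ)..(Real.pi/2),
            Real.sqrt (1 - (2*Real.sqrt (Complex.abs (α+1) * Complex.abs (β+1))
              /(Complex.abs (α+1) + Complex.abs (β+1)))^2 * Real.sin t ^ 2)) * M) := by
        rw [habsC0, hstep4]
    _ = 2 * Complex.abs (cab α β) * (Complex.abs (α + 1) + Complex.abs (β + 1)) / Real.pi *
        (∫ t in (0 : ℝ)..(Real.pi / 2),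
          Real.sqrt (1 -
            (2 * Real.sqrt (Complex.abs (α + 1) * Complex.abs (β + 1)) /
              (Complex.abs (α + 1) + Complex.abs (β + 1))) ^ 2 * Real.sin t ^ 2)) * M := by
        field_simp
        ring

def Wf (α β : ℂ) (z : ℂ) : ℂ := cab α β * ((α+1) * (starRingEnd ℂ) z + (β+1) * z)

def phiExt (α β : ℂ) : ℂ → ℂ := fun z =>
  (starRingEnd ℂ) (Wf α β z) / ((Complex.abs (Wf α β z) : ℝ) : ℂ)

lemma phiExt_bound (α β : ℂ) (z : ℂ) : Complex.abs (phiExt α β z) ≤ 1 := by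
  rcases eq_or_ne (Wf α β z) 0 with h|h
  · simp [phiExt, h]
  · rw [phiExt, map_div₀, Complex.abs_conj, Complex.abs_ofReal,
      _root_.abs_of_nonneg (Complex.abs.nonneg _), div_self (Complex.abs.ne_zero h)]

lemma phiExt_mul (α β : ℂ) (z : ℂ) :
    Wf α β z * phiExt α β z = ((Complex.abs (Wf α β z) : ℝ) : ℂ) := by
  rcases eq_or_ne (Wf α β z) 0 with h|h
  · simp [phiExt, h]
  · have hx : ((Complex.abs (Wf α β z) : ℝ) : ℂ) ≠ 0 := by
      rw [Complex.ofReal_ne_zero]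
      exact Complex.abs.ne_zero h
    rw [phiExt, mul_div_assoc', Complex.mul_conj]
    rw [show (Complex.normSq (Wf α β z) : ℂ) = ((Complex.abs (Wf α β z) : ℝ) : ℂ)^2 by
      rw [Complex.normSq_eq_abs]; push_cast; ring]
    rw [sq]
    field_simp

lemma continuous_Wf (α β : ℂ) : Continuous (Wf α β) := by
  unfold Wf
  exact continuous_const.mul ((continuous_const.mul Complex.continuous_conj).add
    (continuous_const.mul continuous_id))

lemma phiExt_meas (α β : ℂ) : Measurable (phiExt α β) := by
  apply Measurable.div
  · exact (Complex.continuous_conj.comp (continuous_Wf α β)).measurable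
  · exact (Complex.continuous_ofReal.comp
      (Complex.continuous_abs.comp (continuous_Wf α β))).measurable

lemma phiExt_int (α β : ℂ) :
    IntervalIntegrable (fun t : ℝ => phiExt α β (Complex.exp (Complex.I * t)))
      volume 0 (2 * Real.pi) := by
  have h2π : (0:ℝ) ≤ 2 * Real.pi := by positivity
  rw [intervalIntegrable_iff]
  have hexp : Continuous fun t : ℝ => Complex.exp (Complex.I * t) :=
    Complex.continuous_exp.comp (continuous_const.mul Complex.continuous_ofReal)
  have hm : AEStronglyMeasurable (fun t : ℝ => phiExt α β (Complex.exp (Complex.I * t)))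
      (volume.restrict (Set.uIoc (0:ℝ) (2*Real.pi))) :=
    ((phiExt_meas α β).comp hexp.measurable).aestronglyMeasurable
  have hg : MeasureTheory.Integrable (fun _ : ℝ => (1:ℝ))
      (volume.restrict (Set.uIoc (0:ℝ) (2*Real.pi))) := by
    rw [Set.uIoc_of_le h2π]
    apply (MeasureTheory.integrableOn_const_iff).mpr
    right
    exact measure_Ioc_lt_top
  refine hg.mono' hm ?_
  filter_upwards with t
  rw [Complex.norm_eq_abs]
  exact phiExt_bound α β _

lemma conj_exp_pI (t : ℝ) :
    (starRingEnd ℂ) (Complex.exp (Complex.I * t)) = Complex.exp (-(Complex.I * t)) := by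
  rw [← Complex.exp_conj]
  congr 1
  simp [Complex.conj_I]

lemma part2 (α β : ℂ) (h1 : α + 1 ≠ 0) (h2 : β + 1 ≠ 0) :
    normD (Pab α β (phiExt α β)) 0 =
      2 * Complex.abs (cab α β) * (Complex.abs (α + 1) + Complex.abs (β + 1)) / Real.pi *
        (∫ t in (0 : ℝ)..(Real.pi / 2),
          Real.sqrt (1 -
            (2 * Real.sqrt (Complex.abs (α + 1) * Complex.abs (β + 1)) /
              (Complex.abs (α + 1) + Complex.abs (β + 1))) ^ 2 * Real.sin t ^ 2)) := by
  have hπ : (0:ℝ) < Real.pi := Real.pi_pos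
  have h2π : (0:ℝ) ≤ 2 * Real.pi := by positivity
  have hφ := phiExt_int α β
  have hbd1 : ∀ᵐ (t : ℝ) ∂volume,
      Complex.abs (phiExt α β (Complex.exp (Complex.I * t))) ≤ 1 :=
    Filter.Eventually.of_forall fun t => phiExt_bound α β _
  have hle := part1 α β h1 h2 (phiExt α β) 1 zero_le_one hφ hbd1
  rw [mul_one] at hle
  refine le_antisymm hle ?_
  -- lower bound
  have hcont1 : Continuous fun t : ℝ => Complex.exp (-(Complex.I * t)) :=
    Complex.continuous_exp.comp ((continuous_const.mul Complex.continuous_ofReal).neg)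
  have hcont2 : Continuous fun t : ℝ => Complex.exp (Complex.I * t) :=
    Complex.continuous_exp.comp (continuous_const.mul Complex.continuous_ofReal)
  have hI1 : IntervalIntegrable (fun t : ℝ => Complex.exp (-(Complex.I*t))
      * phiExt α β (Complex.exp (Complex.I*t))) volume 0 (2*Real.pi) :=
    hφ.continuousOn_mul hcont1.continuousOn
  have hI2 : IntervalIntegrable (fun t : ℝ => Complex.exp (Complex.I*t)
      * phiExt α β (Complex.exp (Complex.I*t))) volume 0 (2*Real.pi) :=
    hφ.continuousOn_mul hcont2.continuousOn
  obtain ⟨hw, hwb⟩ := wirtinger_Pab α β (phiExt α β) hφ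
  set C0 : ℂ := cab α β * ((1 / (2 * Real.pi) : ℝ) : ℂ) with hC0
  set E1 : ℂ := ∫ t in (0:ℝ)..(2*Real.pi),
    Complex.exp (-(Complex.I*t)) * phiExt α β (Complex.exp (Complex.I*t)) with hE1def
  set E2 : ℂ := ∫ t in (0:ℝ)..(2*Real.pi),
    Complex.exp (Complex.I*t) * phiExt α β (Complex.exp (Complex.I*t)) with hE2def
  -- the sum A + B equals a real nonnegative integral
  have hWexp : ∀ t : ℝ, Wf α β (Complex.exp (Complex.I*t))
      = cab α β * ((α+1) * Complex.exp (-(Complex.I*t)) + (β+1) * Complex.exp (Complex.I*t)) := by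
    intro t
    rw [Wf, conj_exp_pI]
  have hAB : C0 * ((α+1) * E1) + C0 * ((β+1) * E2)
      = ((1 / (2 * Real.pi) : ℝ) : ℂ) * ∫ t in (0:ℝ)..(2*Real.pi),
          Wf α β (Complex.exp (Complex.I*t)) * phiExt α β (Complex.exp (Complex.I*t)) := by
    have hcong : Set.EqOn (fun t : ℝ =>
        Wf α β (Complex.exp (Complex.I*t)) * phiExt α β (Complex.exp (Complex.I*t)))
        (fun t : ℝ => (cab α β * (α+1))
            * (Complex.exp (-(Complex.I*t)) * phiExt α β (Complex.exp (Complex.I*t)))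
          + (cab α β * (β+1))
            * (Complex.exp (Complex.I*t) * phiExt α β (Complex.exp (Complex.I*t))))
        (Set.uIcc 0 (2*Real.pi)) := by
      intro t _
      simp only [hWexp t]
      ring
    rw [intervalIntegral.integral_congr hcong,
      intervalIntegral.integral_add (hI1.const_mul _) (hI2.const_mul _),
      intervalIntegral.integral_const_mul, intervalIntegral.integral_const_mul, hC0]
    ring
  have habsint : (∫ t in (0:ℝ)..(2*Real.pi),
      Wf α β (Complex.exp (Complex.I*t)) * phiExt α β (Complex.exp (Complex.I*t)))
      = (((∫ t in (0:ℝ)..(2*Real.pi),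
          Complex.abs (Wf α β (Complex.exp (Complex.I*t)))) : ℝ) : ℂ) := by
    rw [← intervalIntegral.integral_ofReal]
    apply intervalIntegral.integral_congr
    intro t _
    exact phiExt_mul α β _
  have habsW : (∫ t in (0:ℝ)..(2*Real.pi), Complex.abs (Wf α β (Complex.exp (Complex.I*t))))
      = Complex.abs (cab α β) * (4 * (Complex.abs (α+1) + Complex.abs (β+1))
        * ∫ t in (0:ℝ)..(Real.pi/2),
          Real.sqrt (1 - (2*Real.sqrt (Complex.abs (α+1) * Complex.abs (β+1))
            /(Complex.abs (α+1) + Complex.abs (β+1)))^2 * Real.sin t ^ 2)) := by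
    have hsumpos : 0 < Complex.abs (α+1) + Complex.abs (β+1) := by
      have := Complex.abs.pos h1
      have := Complex.abs.pos h2
      linarith
    have hcong : Set.EqOn (fun t : ℝ => Complex.abs (Wf α β (Complex.exp (Complex.I*t))))
        (fun t : ℝ => Complex.abs (cab α β)
          * Complex.abs ((α+1) * Complex.exp (-(Complex.I*t))
            + (β+1) * Complex.exp (Complex.I*t)))
        (Set.uIcc 0 (2*Real.pi)) := by
      intro t _
      simp only [hWexp t, map_mul]
    rw [intervalIntegral.integral_congr hcong, intervalIntegral.integral_const_mul,
      lemU (α+1) (β+1) hsumpos]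
  -- conclude
  have hApBeq : C0 * ((α+1) * E1) + C0 * ((β+1) * E2)
      = (((1 / (2 * Real.pi)) * (Complex.abs (cab α β)
          * (4 * (Complex.abs (α+1) + Complex.abs (β+1))
          * ∫ t in (0:ℝ)..(Real.pi/2),
            Real.sqrt (1 - (2*Real.sqrt (Complex.abs (α+1) * Complex.abs (β+1))
              /(Complex.abs (α+1) + Complex.abs (β+1)))^2 * Real.sin t ^ 2))) : ℝ) : ℂ) := by
    rw [hAB, habsint, habsW]
    push_cast
    ring
  have hlow : 2 * Complex.abs (cab α β) * (Complex.abs (α + 1) + Complex.abs (β + 1)) / Real.pi *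
      (∫ t in (0 : ℝ)..(Real.pi / 2),
        Real.sqrt (1 -
          (2 * Real.sqrt (Complex.abs (α + 1) * Complex.abs (β + 1)) /
            (Complex.abs (α + 1) + Complex.abs (β + 1))) ^ 2 * Real.sin t ^ 2))
      = Complex.abs (C0 * ((α+1) * E1) + C0 * ((β+1) * E2)) := by
    rw [hApBeq, Complex.abs_ofReal]
    have hEnn : (0:ℝ) ≤ ∫ t in (0 : ℝ)..(Real.pi / 2),
        Real.sqrt (1 -
          (2 * Real.sqrt (Complex.abs (α + 1) * Complex.abs (β + 1)) /
            (Complex.abs (α + 1) + Complex.abs (β + 1))) ^ 2 * Real.sin t ^ 2) := by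
      apply intervalIntegral.integral_nonneg (by positivity)
      intro t _
      exact Real.sqrt_nonneg _
    rw [_root_.abs_of_nonneg (by positivity)]
    field_simp
    ring
  rw [hlow, normD, hw, hwb]
  exact Complex.abs.add_le _ _

end

theorem stmt5 (α β : ℂ) (hα : notNegInt α) (hβ : notNegInt β)
    (hαβ : -1 < (α + β).re) :
    (∀ (φ : ℂ → ℂ) (M : ℝ), 0 ≤ M →
        IntervalIntegrable (fun t : ℝ => φ (Complex.exp (Complex.I * t)))
          volume 0 (2 * Real.pi) →
        (∀ᵐ (t : ℝ) ∂volume, ‖φ (Complex.exp (Complex.I * t))‖ ≤ M) →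
        normD (Pab α β φ) 0 ≤
          2 * ‖cab α β‖ * (‖α + 1‖ + ‖β + 1‖) / Real.pi *
            (∫ t in (0 : ℝ)..(Real.pi / 2),
              Real.sqrt (1 -
                (2 * Real.sqrt (‖α + 1‖ * ‖β + 1‖) /
                  (‖α + 1‖ + ‖β + 1‖)) ^ 2 * Real.sin t ^ 2)) * M) ∧
    sSup { x : ℝ | ∃ φ : ℂ → ℂ,
        IntervalIntegrable (fun t : ℝ => φ (Complex.exp (Complex.I * t)))
          volume 0 (2 * Real.pi) ∧
        (∀ᵐ (t : ℝ) ∂volume, ‖φ (Complex.exp (Complex.I * t))‖ ≤ 1) ∧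
        x = normD (Pab α β φ) 0 } =
      2 * ‖cab α β‖ * (‖α + 1‖ + ‖β + 1‖) / Real.pi *
        (∫ t in (0 : ℝ)..(Real.pi / 2),
          Real.sqrt (1 -
            (2 * Real.sqrt (‖α + 1‖ * ‖β + 1‖) /
              (‖α + 1‖ + ‖β + 1‖)) ^ 2 * Real.sin t ^ 2)) := by
  have h1 : α + 1 ≠ 0 := fun h => hα 0 (by push_cast; linear_combination h)
  have h2 : β + 1 ≠ 0 := fun h => hβ 0 (by push_cast; linear_combination h)
  constructor
  · intro φ M hM hφ hbd
    exact part1 α β h1 h2 φ M hM hφ hbd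
  · have hmem : (2 * Complex.abs (cab α β) * (Complex.abs (α + 1) + Complex.abs (β + 1))
        / Real.pi *
        (∫ t in (0 : ℝ)..(Real.pi / 2),
          Real.sqrt (1 -
            (2 * Real.sqrt (Complex.abs (α + 1) * Complex.abs (β + 1)) /
              (Complex.abs (α + 1) + Complex.abs (β + 1))) ^ 2 * Real.sin t ^ 2)))
        ∈ { x : ℝ | ∃ φ : ℂ → ℂ,
          IntervalIntegrable (fun t : ℝ => φ (Complex.exp (Complex.I * t)))
            volume 0 (2 * Real.pi) ∧
          (∀ᵐ (t : ℝ) ∂volume, Complex.abs (φ (Complex.exp (Complex.I * t))) ≤ 1) ∧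
          x = normD (Pab α β φ) 0 } :=
      ⟨phiExt α β, phiExt_int α β,
        Filter.Eventually.of_forall (fun t => phiExt_bound α β _),
        (part2 α β h1 h2).symm⟩
    have hub : ∀ x ∈ { x : ℝ | ∃ φ : ℂ → ℂ,
        IntervalIntegrable (fun t : ℝ => φ (Complex.exp (Complex.I * t)))
          volume 0 (2 * Real.pi) ∧
        (∀ᵐ (t : ℝ) ∂volume, Complex.abs (φ (Complex.exp (Complex.I * t))) ≤ 1) ∧
        x = normD (Pab α β φ) 0 },
        x ≤ 2 * Complex.abs (cab α β) * (Complex.abs (α + 1) + Complex.abs (β + 1))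
          / Real.pi *
          (∫ t in (0 : ℝ)..(Real.pi / 2),
            Real.sqrt (1 -
              (2 * Real.sqrt (Complex.abs (α + 1) * Complex.abs (β + 1)) /
                (Complex.abs (α + 1) + Complex.abs (β + 1))) ^ 2 * Real.sin t ^ 2)) := by
      rintro x ⟨φ, hint, hbd, rfl⟩
      have := part1 α β h1 h2 φ 1 zero_le_one hint hbd
      rwa [mul_one] at this
    exact le_antisymm (csSup_le ⟨_, hmem⟩ hub) (le_csSup ⟨_, hub⟩ hmem)
end

section
/- For all real numbers λ₁ > 0 and λ₂ > 0, ∫_{−π}^{π} | λ₁ + λ₂ e^{2it} | dt = 4 (λ₁ + λ₂) ∫₀^{π/2} √( 1 − (4 λ₁ λ₂ / (λ₁ + λ₂)²) sin² t ) dt. -/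
open MeasureTheory

theorem stmt6 (l₁ l₂ : ℝ) (h1 : 0 < l₁) (h2 : 0 < l₂) :
    (∫ t in (-Real.pi)..Real.pi,
        ‖(l₁ : ℂ) + (l₂ : ℂ) * Complex.exp (2 * Complex.I * t)‖) =
      4 * (l₁ + l₂) *
        ∫ t in (0 : ℝ)..(Real.pi / 2),
          Real.sqrt (1 - 4 * l₁ * l₂ / (l₁ + l₂) ^ 2 * Real.sin t ^ 2) := by
  have hsum : 0 < l₁ + l₂ := by linarith
  set m : ℝ := 4 * l₁ * l₂ / (l₁ + l₂) ^ 2 with hm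
  set G : ℝ → ℝ := fun t => Real.sqrt (1 - m * Real.sin t ^ 2) with hG
  have hGcont : Continuous G := by
    apply Real.continuous_sqrt.comp
    continuity
  have hGint : ∀ a b : ℝ, IntervalIntegrable G MeasureTheory.volume a b := fun a b =>
    hGcont.intervalIntegrable a b
  have key : ∀ t : ℝ, ‖(l₁ : ℂ) + (l₂ : ℂ) * Complex.exp (2 * Complex.I * t)‖
      = (l₁ + l₂) * G t := by
    intro t
    have he : (2 * Complex.I * (t : ℂ)) = ((2 * t : ℝ) : ℂ) * Complex.I := by
      push_cast; ring
    have hz : ((l₁ : ℂ) + (l₂ : ℂ) * Complex.exp (2 * Complex.I * t))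
        = Complex.mk (l₁ + l₂ * Real.cos (2 * t)) (l₂ * Real.sin (2 * t)) := by
      have h3 : Complex.exp (((2 * t : ℝ) : ℂ) * Complex.I)
          = Complex.mk (Real.cos (2 * t)) (Real.sin (2 * t)) := by
        apply Complex.ext
        · simpa using Complex.exp_ofReal_mul_I_re (2 * t)
        · simpa using Complex.exp_ofReal_mul_I_im (2 * t)
      rw [he, h3]
      apply Complex.ext <;> simp
    rw [hz, Complex.norm_def, Complex.normSq_mk]
    have harg : (l₁ + l₂ * Real.cos (2 * t)) * (l₁ + l₂ * Real.cos (2 * t)) +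
        l₂ * Real.sin (2 * t) * (l₂ * Real.sin (2 * t))
        = (l₁ + l₂) ^ 2 * (1 - m * Real.sin t ^ 2) := by
      have hc2 : Real.cos (2 * t) = 1 - 2 * Real.sin t ^ 2 := by
        rw [Real.cos_two_mul]
        nlinarith [Real.sin_sq_add_cos_sq t]
      have hs2 : Real.sin (2 * t) = 2 * Real.sin t * Real.cos t := Real.sin_two_mul t
      have hm' : m * (l₁ + l₂) ^ 2 = 4 * l₁ * l₂ := by
        rw [hm]; field_simp
      have hcs : Real.cos t ^ 2 = 1 - Real.sin t ^ 2 := Real.cos_sq' t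
      rw [hc2, hs2]
      linear_combination Real.sin t ^ 2 * hm' + 4 * l₂ ^ 2 * Real.sin t ^ 2 * hcs
    rw [harg, Real.sqrt_mul (by positivity), Real.sqrt_sq hsum.le]
  simp only [key]
  rw [intervalIntegral.integral_const_mul]
  have hsplit1 : ∫ t in (-Real.pi)..Real.pi, G t =
      (∫ t in (-Real.pi)..(0:ℝ), G t) + ∫ t in (0:ℝ)..Real.pi, G t :=
    (intervalIntegral.integral_add_adjacent_intervals (hGint _ _) (hGint _ _)).symm
  have heven : ∫ t in (-Real.pi)..(0:ℝ), G t = ∫ t in (0:ℝ)..Real.pi, G t := by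
    have := intervalIntegral.integral_comp_neg (a := (0:ℝ)) (b := Real.pi) G
    rw [neg_zero] at this
    rw [← this]
    congr 1
    ext t
    simp [hG]
  have hsplit2 : ∫ t in (0:ℝ)..Real.pi, G t =
      (∫ t in (0:ℝ)..(Real.pi/2), G t) + ∫ t in (Real.pi/2)..Real.pi, G t :=
    (intervalIntegral.integral_add_adjacent_intervals (hGint _ _) (hGint _ _)).symm
  have hrefl : ∫ t in (Real.pi/2)..Real.pi, G t = ∫ t in (0:ℝ)..(Real.pi/2), G t := by
    have := intervalIntegral.integral_comp_sub_left (a := (0:ℝ)) (b := Real.pi/2) G Real.pi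
    rw [sub_zero] at this
    have h2 : Real.pi - Real.pi / 2 = Real.pi / 2 := by ring
    rw [h2] at this
    rw [← this]
    congr 1
    ext t
    simp [hG, Real.sin_pi_sub]
  rw [hsplit1, heven, hsplit2, hrefl]
  ring
end
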